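/- arXiv:1711.01636 — 8 statements merged into one kernel-verified Lean document; each statement's English description precedes it below -/
import Mathlib

section
/- For every integer k ≥ 1, the graph G_k^+ is isomorphic to the odd graph O_k = K(2k+1, k). Concretely, the map sending x ∈ B_k^0 to the (2k+1)-bit string x0 and x ∈ B_k^1 to x̄1, interpreted as characteristic vectors of k-element subsets of [2k+1], is a graph isomorphism. -/
/-- `x ∈ B_k`: bitstring of length `2k` with weight `k` or `k+1`. -/
def inB (k : ℕ) (x : List Bool) : Prop :=
  x.length = 2*k ∧ (x.count true = k ∨ x.count true = k+1)

/-- Dyck word: equally many 1s and 0s, every prefix has at least as many 1s as 0s. -/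
def isDyck (x : List Bool) : Prop :=
  x.count true = x.count false ∧ ∀ n, (x.take n).count false ≤ (x.take n).count true

/-- Complement of the reverse. -/
def mirror (x : List Bool) : List Bool := x.reverse.map (fun b => !b)

/-- Bitwise complement. -/
def compl (x : List Bool) : List Bool := x.map (fun b => !b)

/-- Specification of the recursively defined bit-flip sequence `π`. -/
def IsPiFun (π : List Bool → List ℕ) : Prop :=
  π [] = [] ∧ ∀ u v : List Bool, isDyck u → isDyck v →
    π (true :: u ++ false :: v) =
      (u.length + 2) :: ((π (mirror u)).map (fun a => u.length + 2 - a))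
        ++ 1 :: ((π v).map (fun a => u.length + 2 + a))

/-- Flip the bit at (1-indexed) position `a`. -/
def flipBit (y : List Bool) (a : ℕ) : List Bool := y.set (a-1) (!(y.getD (a-1) false))

/-- The path `P(x)`, as the list of vertices obtained by flipping bits in order `π x`. -/
def pathOf (π : List Bool → List ℕ) (x : List Bool) : List (List Bool) :=
  List.scanl flipBit x (π x)

/-- Adjacency in `G_k`: both vertices in `B_k`, differing in exactly one position. -/
def GkAdj (k : ℕ) (x y : List Bool) : Prop :=
  inB k x ∧ inB k y ∧ (List.range (2*k)).countP (fun i => x.getD i false != y.getD i false) = 1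

/-- Adjacency in `G_k^+`: a `G_k` edge or a complement edge. -/
def GkPlusAdj (k : ℕ) (x y : List Bool) : Prop :=
  GkAdj k x y ∨ (inB k x ∧ inB k y ∧ (y = compl x ∨ x = compl y))
/-- The Kneser graph `K(n,k)`: vertices are `k`-element subsets of `[n]`,
edges connect disjoint subsets. -/
def kneser (n k : ℕ) : SimpleGraph {s : Finset (Fin n) // s.card = k} where
  Adj s t := s ≠ t ∧ Disjoint s.val t.val
  symm := ⟨fun s t h => ⟨h.1.symm, h.2.symm⟩⟩
  loopless := ⟨fun s h => h.1 rfl⟩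

/-- The graph `G_k^+` on `B_k`: bit-flip edges together with complement edges. -/
def GkPlus (k : ℕ) : SimpleGraph {x : List Bool // inB k x} where
  Adj x y := x ≠ y ∧
    (((List.range (2*k)).countP (fun i => x.val.getD i false != y.val.getD i false) = 1)
      ∨ (x.val.count true = k ∧ y.val = compl x.val)
      ∨ (y.val.count true = k ∧ x.val = compl y.val))
  symm := by
    constructor
    rintro x y ⟨hne, h⟩
    refine ⟨hne.symm, ?_⟩
    rcases h with h | h | h
    · left
      have : (fun i => x.val.getD i false != y.val.getD i false)
          = (fun i => y.val.getD i false != x.val.getD i false) := by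
        funext i; simp [bne, Bool.beq_comm]
      rwa [this] at h
    · right; right; exact h
    · right; left; exact h
  loopless := ⟨fun x h => h.1 rfl⟩

/-- The characteristic subset of `[n]` of a bitstring. -/
def charSet (n : ℕ) (y : List Bool) : Finset (Fin n) :=
  Finset.univ.filter (fun i => y.getD i.val false = true)


/-!
Identify a bitstring `x` of length `2k` with its support `A ⊆ [2k]`, viewed inside `[2k+1]`.
The map `x ↦ x0`, resp. `x ↦ x̄1`, becomes `A ↦ A` when `|A| = k` and `A ↦ Aᶜ` when
`|A| = k+1`: a bijection onto the `k`-subsets of `[2k+1]`, the case being recorded by whether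
the image contains `2k+1`. Two images are disjoint exactly when `|A| = |B| = k` and
`B = [2k] \ A` (a complement edge), or `|A| = k`, `|B| = k+1` and `A ⊆ B` (a bit-flip edge);
two sets of size `k+1` never qualify, as both complements contain `2k+1`.
-/
open Finset
open scoped symmDiff

section Slices

variable {α : Type*} [DecidableEq α]

lemma card_symmDiff_ne_one_of_card_eq {A B : Finset α} (h : #A = #B) : #(A ∆ B) ≠ 1 := by
  rw [symmDiff_def, sup_eq_union, card_union_of_disjoint disjoint_sdiff_sdiff,
    card_sdiff_comm h]
  omega

lemma card_symmDiff_eq_one_iff_subset {A B : Finset α} (h : #A + 1 = #B) :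
    #(A ∆ B) = 1 ↔ A ⊆ B := by
  rw [symmDiff_def, sup_eq_union, card_union_of_disjoint disjoint_sdiff_sdiff,
    ← sdiff_eq_empty_iff_subset, ← card_eq_zero]
  have hA := card_sdiff_add_card_inter A B
  have hB := card_sdiff_add_card_inter B A
  rw [inter_comm] at hB
  omega

variable [Fintype α]

def toKneser (k : ℕ) (A : Finset α) : Finset α := if #A = k then A else Aᶜ

/-- Adjacency of `G_k^+` read on supports; `p` is the padding position, so `Aᶜ.erase p` is the
support of the complementary bitstring. -/
def MiddleLevelsPlusAdj (k : ℕ) (p : α) (A B : Finset α) : Prop :=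
  A ≠ B ∧ (#(A ∆ B) = 1 ∨ (#A = k ∧ B = Aᶜ.erase p) ∨ (#B = k ∧ A = Bᶜ.erase p))

variable {k : ℕ} {p : α} {A B : Finset α}

lemma MiddleLevelsPlusAdj.symm (h : MiddleLevelsPlusAdj k p A B) :
    MiddleLevelsPlusAdj k p B A := by
  obtain ⟨hne, h | h | h⟩ := h
  · exact ⟨hne.symm, Or.inl (by rwa [symmDiff_comm])⟩
  · exact ⟨hne.symm, Or.inr (Or.inr h)⟩
  · exact ⟨hne.symm, Or.inr (Or.inl h)⟩

lemma middleLevelsPlusAdj_comm :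
    MiddleLevelsPlusAdj k p A B ↔ MiddleLevelsPlusAdj k p B A :=
  ⟨.symm, .symm⟩

lemma card_compl_erase (hα : Fintype.card α = 2 * k + 1) (hA : #A = k) (hpA : p ∉ A) :
    #(Aᶜ.erase p) = k := by
  rw [card_erase_of_mem (mem_compl.2 hpA), card_compl, hα, hA]
  omega

lemma card_toKneser (hα : Fintype.card α = 2 * k + 1) (hA : #A = k ∨ #A = k + 1) :
    #(toKneser k A) = k := by
  unfold toKneser
  split_ifs with h
  · exact h
  · rw [card_compl, hα]
    omega

lemma mem_toKneser_iff (hpA : p ∉ A) : p ∈ toKneser k A ↔ #A ≠ k := by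
  unfold toKneser
  split_ifs with h <;> simp [h, hpA]

lemma toKneser_inj (hpA : p ∉ A) (hpB : p ∉ B) : toKneser k A = toKneser k B ↔ A = B := by
  refine ⟨fun h => ?_, congrArg _⟩
  have hcard : #A = k ↔ #B = k := by
    refine not_iff_not.mp ?_
    simpa [mem_toKneser_iff hpA, mem_toKneser_iff hpB] using congrArg (p ∈ ·) h
  unfold toKneser at h
  by_cases hA : #A = k
  · rwa [if_pos hA, if_pos (hcard.1 hA)] at h
  · rwa [if_neg hA, if_neg (hcard.not.1 hA), compl_inj_iff] at h

lemma exists_toKneser_eq (hα : Fintype.card α = 2 * k + 1) (p : α) {s : Finset α}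
    (hs : #s = k) :
    ∃ A, p ∉ A ∧ (#A = k ∨ #A = k + 1) ∧ toKneser k A = s := by
  by_cases hp : p ∈ s
  · have hsc : #sᶜ = k + 1 := by rw [card_compl, hα, hs]; omega
    refine ⟨sᶜ, notMem_compl.2 hp, Or.inr hsc, ?_⟩
    rw [toKneser, if_neg (by omega), compl_compl]
  · exact ⟨s, hp, Or.inl hs, if_pos hs⟩

lemma disjoint_iff_eq_compl_erase (hα : Fintype.card α = 2 * k + 1) (hpA : p ∉ A)
    (hpB : p ∉ B) (hA : #A = k) (hB : #B = k) : Disjoint A B ↔ B = Aᶜ.erase p := by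
  refine ⟨fun h => eq_of_subset_of_card_le (fun b hb => ?_) ?_, ?_⟩
  · exact mem_erase.2 ⟨fun hbp => hpB (hbp ▸ hb), mem_compl.2 (disjoint_right.1 h hb)⟩
  · rw [card_compl_erase hα hA hpA, hB]
  · rintro rfl
    exact disjoint_compl_right.mono_right (erase_subset _ _)

lemma toKneser_adj_iff_of_card_eq_succ (hα : Fintype.card α = 2 * k + 1) (hpA : p ∉ A)
    (hpB : p ∉ B) (hA : #A = k) (hB : #B = k + 1) :
    (toKneser k A ≠ toKneser k B ∧ Disjoint (toKneser k A) (toKneser k B)) ↔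
      MiddleLevelsPlusAdj k p A B := by
  have hB' : #B ≠ k := by omega
  rw [toKneser, toKneser, if_pos hA, if_neg hB', disjoint_compl_right_iff]
  have hne : A ≠ Bᶜ := fun h => hpA (h ▸ mem_compl.2 hpB)
  have hAB : A ≠ B := fun h => hB' (h ▸ hA)
  have hnot : B ≠ Aᶜ.erase p := fun h => hB' (h ▸ card_compl_erase hα hA hpA)
  simp only [MiddleLevelsPlusAdj, card_symmDiff_eq_one_iff_subset (hA ▸ hB.symm), hne, hAB, hnot,
    hB', ne_eq, not_false_eq_true, true_and, and_false, false_and, or_false]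

lemma toKneser_adj_iff (hα : Fintype.card α = 2 * k + 1) (hpA : p ∉ A) (hpB : p ∉ B)
    (hA : #A = k ∨ #A = k + 1) (hB : #B = k ∨ #B = k + 1) :
    (toKneser k A ≠ toKneser k B ∧ Disjoint (toKneser k A) (toKneser k B)) ↔
      MiddleLevelsPlusAdj k p A B := by
  rcases hA with hA | hA <;> rcases hB with hB | hB
  · have hAB := card_symmDiff_ne_one_of_card_eq (hA.trans hB.symm)
    rw [toKneser, toKneser, if_pos hA, if_pos hB, MiddleLevelsPlusAdj,
      ← disjoint_iff_eq_compl_erase hα hpA hpB hA hB,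
      ← disjoint_iff_eq_compl_erase hα hpB hpA hB hA, disjoint_comm]
    simp [hA, hB, hAB]
  · exact toKneser_adj_iff_of_card_eq_succ hα hpA hpB hA hB
  · rw [ne_comm, disjoint_comm, middleLevelsPlusAdj_comm]
    exact toKneser_adj_iff_of_card_eq_succ hα hpB hpA hB hA
  · have hnd : ¬ Disjoint (toKneser k A) (toKneser k B) := fun h =>
      disjoint_left.1 h ((mem_toKneser_iff hpA).2 (by omega)) ((mem_toKneser_iff hpB).2 (by omega))
    have hAB := card_symmDiff_ne_one_of_card_eq (hA.trans hB.symm)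
    simp [MiddleLevelsPlusAdj, hnd, hAB, hA, hB]

end Slices

section Bitstrings

variable {n m : ℕ} {x y : List Bool}

lemma mem_charSet {i : Fin n} : i ∈ charSet n x ↔ x.getD i false = true := by
  simp [charSet]

lemma lt_length_of_mem_charSet {i : Fin n} (h : i ∈ charSet n x) : (i : ℕ) < x.length := by
  by_contra hi
  rw [mem_charSet, List.getD_eq_default _ _ (not_lt.1 hi)] at h
  exact Bool.false_ne_true h

lemma last_notMem_charSet (hx : x.length ≤ m) : Fin.last m ∉ charSet (m + 1) x :=
  fun h => (lt_length_of_mem_charSet h).not_ge (by simpa using hx)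

lemma charSet_append_false : charSet n (x ++ [false]) = charSet n x := by
  ext i
  simp only [mem_charSet, List.getD_eq_getElem?_getD, List.getElem?_append]
  split_ifs with h
  · rfl
  · simp [List.getElem?_eq_none (not_lt.1 h)]

lemma charSet_compl (hx : x.length = m) :
    charSet (m + 1) (compl x) = (charSet (m + 1) x)ᶜ.erase (Fin.last m) := by
  subst hx
  ext i
  simp only [mem_charSet, mem_erase, mem_compl, List.getD_eq_getElem?_getD, _root_.compl,
    List.getElem?_map, ne_eq, Fin.ext_iff, Fin.val_last]
  obtain hi | hi := lt_or_ge (i : ℕ) x.length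
  · simp [List.getElem?_eq_getElem hi, hi.ne]
  · have him : (i : ℕ) = x.length := by omega
    simp [him]

lemma charSet_append_true (hx : x.length = m) :
    charSet (m + 1) (x ++ [true]) = insert (Fin.last m) (charSet (m + 1) x) := by
  subst hx
  ext i
  simp only [mem_charSet, mem_insert, List.getD_eq_getElem?_getD, List.getElem?_append,
    Fin.ext_iff, Fin.val_last]
  obtain hi | hi := lt_or_ge (i : ℕ) x.length
  · simp [hi, hi.ne]
  · have him : (i : ℕ) = x.length := by omega
    simp [him]

lemma charSet_compl_append_true (hx : x.length = m) :
    charSet (m + 1) (compl x ++ [true]) = (charSet (m + 1) x)ᶜ := by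
  rw [charSet_append_true (by simpa [_root_.compl] using hx), charSet_compl hx,
    insert_erase (mem_compl.2 (last_notMem_charSet hx.le))]

lemma card_filter_fin_eq_count (p : ℕ → Prop) [DecidablePred p] (n : ℕ) :
    #{i : Fin n | p i} = Nat.count p n := by
  rw [Nat.count_eq_card_filter_range, ← card_map Fin.valEmbedding]
  congr 1
  ext j
  simp [Fin.exists_iff, and_comm]

lemma count_getD_eq_count_true (hx : x.length ≤ n) :
    Nat.count (fun i => x.getD i false = true) n = x.count true := by
  induction x generalizing n with
  | nil => simp
  | cons b x ih =>
    obtain ⟨n, rfl⟩ : ∃ n', n = n' + 1 := ⟨n - 1, by simp at hx; omega⟩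
    simp only [Nat.count_succ', List.getD_cons_succ, List.getD_cons_zero]
    rw [ih (by simpa using hx)]
    cases b <;> simp

lemma card_charSet (hx : x.length ≤ n) : #(charSet n x) = x.count true := by
  rw [charSet, card_filter_fin_eq_count (fun i => x.getD i false = true),
    count_getD_eq_count_true hx]

lemma countP_range_bne_eq_card_symmDiff (hx : x.length ≤ m) (hy : y.length ≤ m) :
    (List.range m).countP (fun i => x.getD i false != y.getD i false)
      = #(charSet (m + 1) x ∆ charSet (m + 1) y) := by
  have hsymm : charSet (m + 1) x ∆ charSet (m + 1) y
      = univ.filter (fun i : Fin (m + 1) => x.getD i false ≠ y.getD i false) := by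
    ext i
    simp only [mem_symmDiff, mem_charSet, mem_filter, mem_univ, true_and]
    cases x.getD i false <;> cases y.getD i false <;> simp
  rw [hsymm, card_filter_fin_eq_count (fun i => x.getD i false ≠ y.getD i false), Nat.count_succ,
    List.getD_eq_default _ _ hx, List.getD_eq_default _ _ hy, if_neg (not_not.2 rfl), add_zero,
    Nat.count]
  exact List.countP_congr fun i _ => by simp

lemma charSet_inj (hxy : x.length = y.length) (hx : x.length ≤ n) :
    charSet n x = charSet n y ↔ x = y := by
  refine ⟨fun h => List.ext_getElem hxy fun i hix hiy => ?_, fun h => h ▸ rfl⟩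
  have := congrArg ((⟨i, by omega⟩ : Fin n) ∈ ·) h
  rw [mem_charSet, mem_charSet, List.getD_eq_getElem _ _ hix, List.getD_eq_getElem _ _ hiy] at this
  simpa using this

lemma exists_charSet_eq {s : Finset (Fin (m + 1))} (hs : Fin.last m ∉ s) :
    ∃ x : List Bool, x.length = m ∧ charSet (m + 1) x = s := by
  refine ⟨List.ofFn fun i : Fin m => decide (i.castSucc ∈ s), by simp, ?_⟩
  ext i
  by_cases hi : (i : ℕ) < m
  · simp [mem_charSet, List.getD_eq_getElem?_getD, hi]
  · have : i = Fin.last m := Fin.ext (by simp; omega)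
    simp [mem_charSet, List.getD_eq_getElem?_getD, this, hs]

end Bitstrings

section MiddleLevels

variable {k : ℕ} {x : List Bool}

lemma toKneser_charSet {m : ℕ} (hx : x.length = m) :
    toKneser k (charSet (m + 1) x) = if x.count true = k then charSet (m + 1) (x ++ [false])
      else charSet (m + 1) (compl x ++ [true]) := by
  rw [toKneser, card_charSet (by omega), charSet_append_false, charSet_compl_append_true hx]

lemma inB.last_notMem_charSet (hx : inB k x) : Fin.last (2 * k) ∉ charSet (2 * k + 1) x :=
  _root_.last_notMem_charSet hx.1.le

lemma inB.card_charSet (hx : inB k x) :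
    #(charSet (2 * k + 1) x) = k ∨ #(charSet (2 * k + 1) x) = k + 1 := by
  rw [_root_.card_charSet (by have := hx.1; omega)]
  exact hx.2

lemma gkPlus_adj_iff {x y : {x : List Bool // inB k x}} :
    (GkPlus k).Adj x y ↔ MiddleLevelsPlusAdj k (Fin.last (2 * k))
      (charSet (2 * k + 1) x) (charSet (2 * k + 1) y) := by
  obtain ⟨x, hxl, -⟩ := x
  obtain ⟨y, hyl, -⟩ := y
  have hcompl {u v : List Bool} (hu : u.length = 2 * k) (hv : v.length = 2 * k) :
      v = compl u ↔
        charSet (2 * k + 1) v = (charSet (2 * k + 1) u)ᶜ.erase (Fin.last (2 * k)) := by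
    rw [← charSet_compl hu, charSet_inj (x := v) (by simp [_root_.compl, hu, hv]) (by omega)]
  simp only [GkPlus, MiddleLevelsPlusAdj, ne_eq, Subtype.ext_iff,
    ← charSet_inj (hxl.trans hyl.symm) (by omega : x.length ≤ 2 * k + 1),
    countP_range_bne_eq_card_symmDiff hxl.le hyl.le,
    card_charSet (by omega : x.length ≤ 2 * k + 1),
    card_charSet (by omega : y.length ≤ 2 * k + 1),
    hcompl hxl hyl, hcompl hyl hxl]

end MiddleLevels

theorem stmt_0_general (k : ℕ) :
    ∃ e : GkPlus k ≃g kneser (2*k+1) k,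
      ∀ x : {x : List Bool // inB k x},
        ((e x : {s : Finset (Fin (2*k+1)) // s.card = k}) : Finset (Fin (2*k+1)))
          = if x.val.count true = k
              then charSet (2*k+1) (x.val ++ [false])
              else charSet (2*k+1) (compl x.val ++ [true]) := by
  have hα : Fintype.card (Fin (2 * k + 1)) = 2 * k + 1 := Fintype.card_fin _
  let f (x : {x : List Bool // inB k x}) : {s : Finset (Fin (2 * k + 1)) // #s = k} :=
    ⟨toKneser k (charSet (2 * k + 1) x), card_toKneser hα x.2.card_charSet⟩
  have hf : Function.Bijective f := by
    refine ⟨fun x y h => Subtype.ext ?_, fun s => ?_⟩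
    · rwa [Subtype.mk.injEq, toKneser_inj x.2.last_notMem_charSet y.2.last_notMem_charSet,
        charSet_inj (x.2.1.trans y.2.1.symm) (by have := x.2.1; omega)] at h
    · obtain ⟨A, hpA, hA, hAs⟩ := exists_toKneser_eq hα (Fin.last (2 * k)) s.2
      obtain ⟨x, hx, rfl⟩ := exists_charSet_eq hpA
      exact ⟨⟨x, hx, by rwa [card_charSet (by omega)] at hA⟩, Subtype.ext hAs⟩
  refine ⟨⟨Equiv.ofBijective f hf, fun {x y} => ?_⟩, fun x => toKneser_charSet x.2.1⟩
  rw [gkPlus_adj_iff, ← toKneser_adj_iff hα x.2.last_notMem_charSet y.2.last_notMem_charSet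
    x.2.card_charSet y.2.card_charSet]
  simp [kneser, f, Subtype.ext_iff]

theorem stmt_0 (k : ℕ) (hk : 1 ≤ k) :
    ∃ e : GkPlus k ≃g kneser (2*k+1) k,
      ∀ x : {x : List Bool // inB k x},
        ((e x : {s : Finset (Fin (2*k+1)) // s.card = k}) : Finset (Fin (2*k+1)))
          = if x.val.count true = k
              then charSet (2*k+1) (x.val ++ [false])
              else charSet (2*k+1) (compl x.val ++ [true]) :=
  stmt_0_general k
end

section
/- For every Dyck word x of length 2k, the sequence π(x) defined recursively by π(ε) = () and π(1u0v) = (|u|+2, (|u|+2) − π(ū^rev), 1, (|u|+2) + π(v)) for Dyck words u, v, is a permutation of the set {1,...,2k}. -/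
/-!
Strong induction along the first-return decomposition `x = 1u0v` of a Dyck word. By induction
`π (mirror u)` and `π v` are permutations of `[1, |u|]` and `[1, |v|]`, so the reflected block
`|u| + 2 - π (mirror u)` fills `[2, |u| + 1]`, the shifted block `|u| + 2 + π v` fills
`[|u| + 3, |x|]`, and the two singletons `|u| + 2` and `1` fill the gaps. Dyck words are handled
through the height `#1 - #0`: mirroring negates heights and turns suffixes into prefixes.
-/

def height (l : List Bool) : ℤ := l.count true - l.count false

@[simp] lemma height_nil : height [] = 0 := rfl

@[simp] lemma height_cons_true (l : List Bool) : height (true :: l) = 1 + height l := by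
  rw [height, height, List.count_cons_self, List.count_cons_of_ne (by decide)]; push_cast; ring

@[simp] lemma height_cons_false (l : List Bool) : height (false :: l) = -1 + height l := by
  rw [height, height, List.count_cons_self, List.count_cons_of_ne (by decide)]; push_cast; ring

@[simp] lemma height_append (l₁ l₂ : List Bool) :
    height (l₁ ++ l₂) = height l₁ + height l₂ := by
  simp only [height, List.count_append]; push_cast; ring

lemma height_mirror (l : List Bool) : height (mirror l) = -height l := by
  have hnot : Function.Injective (fun b : Bool => !b) := by decide
  have ht := List.count_map_of_injective l.reverse _ hnot false
  have hf := List.count_map_of_injective l.reverse _ hnot true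
  simp only [Bool.not_false, Bool.not_true, List.count_reverse] at ht hf
  simp only [height, mirror, ht, hf]; ring

lemma isDyck_iff_height (x : List Bool) :
    isDyck x ↔ height x = 0 ∧ ∀ n, 0 ≤ height (x.take n) := by
  simp only [isDyck, height, sub_eq_zero, sub_nonneg, Nat.cast_inj, Nat.cast_le]

lemma length_mirror (l : List Bool) : (mirror l).length = l.length := by simp [mirror]

lemma mirror_take (l : List Bool) (n : ℕ) :
    (mirror l).take n = mirror (l.drop (l.length - n)) := by
  simp only [mirror, ← List.map_take, List.take_reverse]

lemma isDyck.mirror {u : List Bool} (hu : isDyck u) : isDyck (mirror u) := by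
  rw [isDyck_iff_height] at hu ⊢
  obtain ⟨hu0, hpre⟩ := hu
  refine ⟨by rw [height_mirror, hu0, neg_zero], fun n => ?_⟩
  have hsplit := congrArg height (List.take_append_drop (u.length - n) u)
  rw [height_append] at hsplit
  rw [mirror_take, height_mirror]
  linarith [hpre (u.length - n)]

-- `u` is the part of `t` before its first prefix of height `-1`.
lemma exists_eq_append_false_cons {t : List Bool} (hge : ∀ m, -1 ≤ height (t.take m))
    (ht : height t = -1) : ∃ u v, isDyck u ∧ isDyck v ∧ t = u ++ false :: v := by
  have hex : ∃ n, height (t.take n) = -1 := ⟨t.length, by rwa [List.take_length]⟩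
  have hmin : ∀ m < Nat.find hex, 0 ≤ height (t.take m) := fun m hm => by
    have := Nat.find_min hex hm
    have := hge m
    omega
  obtain ⟨m, hm⟩ : ∃ m, Nat.find hex = m + 1 :=
    Nat.exists_eq_add_one_of_ne_zero fun h0 => by simpa [h0] using Nat.find_spec hex
  have hfind := Nat.find_spec hex
  have hu := hmin m (by omega)
  rw [hm] at hfind
  obtain ⟨c, v, hdrop⟩ : ∃ c v, t.drop m = c :: v := by
    rcases hd : t.drop m with _ | ⟨c, v⟩
    · rw [List.drop_eq_nil_iff] at hd
      rw [List.take_of_length_le (by omega)] at hfind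
      rw [List.take_of_length_le hd] at hu
      omega
    · exact ⟨c, v, rfl⟩
  rw [List.take_add, hdrop, List.take_succ_cons, List.take_zero, height_append] at hfind
  obtain ⟨rfl, hu0⟩ : c = false ∧ height (t.take m) = 0 := by
    cases c
    · rw [height_cons_false, height_nil] at hfind
      exact ⟨rfl, by linarith⟩
    · rw [height_cons_true, height_nil] at hfind
      linarith
  have htv : t = t.take m ++ false :: v := by rw [← hdrop, List.take_append_drop]
  refine ⟨t.take m, v, (isDyck_iff_height _).2 ⟨hu0, fun j => ?_⟩,
    (isDyck_iff_height _).2 ⟨?_, fun j => ?_⟩, htv⟩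
  · rw [List.take_take]
    exact hmin _ (by omega)
  · have := congrArg height htv
    rw [height_append, height_cons_false, hu0, ht] at this
    linarith
  · have := hge (m + (j + 1))
    rw [List.take_add, hdrop, List.take_succ_cons, height_append, height_cons_false, hu0] at this
    linarith

lemma isDyck.exists_eq_cons_append_cons {x : List Bool} (hx : isDyck x) (hne : x ≠ []) :
    ∃ u v, isDyck u ∧ isDyck v ∧ x = true :: u ++ false :: v := by
  obtain ⟨b, t, rfl⟩ := List.exists_cons_of_ne_nil hne
  obtain ⟨hx0, hpre⟩ := (isDyck_iff_height _).1 hx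
  obtain rfl : b = true := by
    cases b
    · simpa using hpre 1
    · rfl
  have hge : ∀ m, -1 ≤ height (t.take m) := fun m => by
    have := hpre (m + 1)
    rw [List.take_succ_cons, height_cons_true] at this
    linarith
  obtain ⟨u, v, hu, hv, rfl⟩ :=
    exists_eq_append_false_cons hge (by rw [height_cons_true] at hx0; linarith)
  exact ⟨u, v, hu, hv, rfl⟩

lemma map_sub_range'_perm (n : ℕ) :
    ((List.range' 1 n).map (fun a => n + 2 - a)).Perm (List.range' 2 n) := by
  have hrev : (List.range' 1 n).map (fun a => n + 2 - a) = (List.range' 2 n).reverse := by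
    rw [List.range'_eq_map_range, List.map_map, List.reverse_range']
    refine List.map_congr_left fun i _ => ?_
    simp only [Function.comp_apply]
    omega
  rw [hrev]
  exact List.reverse_perm _

lemma range'_perm_cons_append_cons (L M : ℕ) :
    (List.range' 1 (L + M + 2)).Perm
      ((L + 2) :: (List.range' 2 L ++ 1 :: List.range' (L + 3) M)) := by
  have hsplit : List.range' 1 (L + M + 2) =
      1 :: (List.range' 2 L ++ (L + 2) :: List.range' (L + 3) M) := by
    rw [show L + M + 2 = (L + 1) + (M + 1) by omega, ← List.range'_append, List.range'_succ,
      List.range'_succ, List.cons_append, show 1 + 1 * (L + 1) = L + 2 by omega]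
  rw [hsplit]
  refine (List.perm_middle.cons 1).trans ?_
  refine (List.Perm.swap _ _ _).trans ?_
  exact List.perm_middle.symm.cons _

theorem IsPiFun.perm_range' {π : List Bool → List ℕ} (hπ : IsPiFun π) {x : List Bool}
    (hx : isDyck x) : (π x).Perm (List.range' 1 x.length) := by
  induction h : x.length using Nat.strong_induction_on generalizing x with
  | _ n ih =>
    subst h
    rcases eq_or_ne x [] with rfl | hne
    · simp [hπ.1]
    obtain ⟨u, v, hu, hv, rfl⟩ := hx.exists_eq_cons_append_cons hne
    have hlen : (true :: u ++ false :: v).length = u.length + v.length + 2 := by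
      simp only [List.cons_append, List.length_cons, List.length_append]; omega
    have hA :
        ((π (mirror u)).map (fun a => u.length + 2 - a)).Perm (List.range' 2 u.length) := by
      have := ih _ (by rw [length_mirror]; omega) hu.mirror rfl
      rw [length_mirror] at this
      exact (this.map _).trans (map_sub_range'_perm _)
    have hB :
        ((π v).map (fun a => u.length + 2 + a)).Perm (List.range' (u.length + 3) v.length) := by
      have := (ih _ (by omega) hv rfl).map (fun a => u.length + 2 + a)
      rwa [List.map_add_range'] at this
    rw [hπ.2 u v hu hv, hlen]
    exact ((hA.append (hB.cons 1)).cons _).trans (range'_perm_cons_append_cons _ _).symm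

theorem stmt_4 (π : List Bool → List ℕ) (hπ : IsPiFun π) (k : ℕ) (x : List Bool)
    (hx : isDyck x) (hl : x.length = 2*k) :
    (π x).Perm (List.range' 1 (2*k)) :=
  hl ▸ hπ.perm_range' hx
end

section
/- For every k ≥ 1, the paths P(x) for x ranging over all Dyck words of length 2k are mutually vertex-disjoint, and their vertex sets together cover all bitstrings of length 2k with weight k or k+1. Equivalently: for every bitstring y of length 2k and weight k or k+1, there is exactly one pair (x,i) with x a Dyck word of length 2k and 0 ≤ i ≤ 2k such that y = x_i in P(x) = (x_0,...,x_{2k}). -/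
/-!
Write a nonempty Dyck word as `x = 1 u 0 v` with `u`, `v` Dyck. Unfolding `π`, the path `P(x)` is
`x`, followed by the words `1 · mirror w · 1 v` for `w` on `P(mirror u)`, followed by the words
`0 · compl u · 1 · w` for `w` on `P(v)`. Hence `x` is the only Dyck word on `P(x)`, and the two
segments are told apart by the first bit. A word has at most one factorisation `s · 1 · v` with
`v` Dyck and at most one `compl u · 1 · w` with `u` Dyck (first passage of the balance), and such
factorisations exist as soon as the balance is positive. So a word `y ∈ B_k` on some path pins
down the segment, then `v` or `u`, and a vertex of a shorter path; conversely it is reached by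
reading these steps backwards. Both directions are inductions on the length.
-/

lemma List.foldl_map_semiconj {α α' β γ : Type*} {f : β → α → β} {f' : γ → α' → γ}
    {g : β → γ} {φ : α → α'} (Q : β → Prop) {l : List α}
    (hQ : ∀ z, Q z → ∀ a ∈ l, Q (f z a)) (hg : ∀ z, Q z → ∀ a ∈ l, f' (g z) (φ a) = g (f z a))
    {x : β} (hx : Q x) : (l.map φ).foldl f' (g x) = g (l.foldl f x) := by
  induction l generalizing x with
  | nil => rfl
  | cons a l ih =>
    rw [List.map_cons, List.foldl_cons, List.foldl_cons, hg x hx a (by simp)]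
    exact ih (fun z hz b hb => hQ z hz b (by simp [hb]))
      (fun z hz b hb => hg z hz b (by simp [hb])) (hQ x hx a (by simp))

namespace DyckPath

def bal (x : List Bool) : ℤ := x.count true - x.count false

@[simp] lemma bal_nil : bal [] = 0 := rfl

@[simp] lemma bal_cons (b : Bool) (x : List Bool) :
    bal (b :: x) = (if b then 1 else -1) + bal x := by
  cases b <;> simp [bal] <;> ring

@[simp] lemma bal_append (s t : List Bool) : bal (s ++ t) = bal s + bal t := by
  simp [bal, List.count_append]; ring

lemma two_mul_count_true (x : List Bool) : 2 * (x.count true : ℤ) = x.length + bal x := by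
  induction x with
  | nil => simp
  | cons b x ih => cases b <;> simp at ih ⊢ <;> linarith

lemma inB_iff (k : ℕ) (y : List Bool) :
    inB k y ↔ y.length = 2 * k ∧ (bal y = 0 ∨ bal y = 2) := by
  have h := two_mul_count_true y
  refine and_congr_right fun hy => ?_
  rw [hy] at h
  push_cast at h
  omega

@[simp] lemma compl_nil : compl [] = [] := rfl

@[simp] lemma compl_cons (b : Bool) (x : List Bool) : compl (b :: x) = (!b) :: compl x := rfl

@[simp] lemma compl_append (s t : List Bool) : compl (s ++ t) = compl s ++ compl t :=
  List.map_append

@[simp] lemma compl_compl (x : List Bool) : compl (compl x) = x := by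
  induction x <;> simp_all

@[simp] lemma length_compl (x : List Bool) : (compl x).length = x.length := List.length_map _

@[simp] lemma bal_compl (x : List Bool) : bal (compl x) = -bal x := by
  induction x with
  | nil => rfl
  | cons b x ih => cases b <;> simp [ih] <;> ring

@[simp] lemma mirror_nil : mirror [] = [] := rfl

@[simp] lemma mirror_cons (b : Bool) (x : List Bool) : mirror (b :: x) = mirror x ++ [!b] := by
  simp [mirror]

@[simp] lemma mirror_append (s t : List Bool) : mirror (s ++ t) = mirror t ++ mirror s := by
  simp [mirror]

@[simp] lemma mirror_mirror (x : List Bool) : mirror (mirror x) = x := by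
  induction x <;> simp_all

@[simp] lemma mirror_inj {x y : List Bool} : mirror x = mirror y ↔ x = y :=
  (Function.LeftInverse.injective mirror_mirror).eq_iff

@[simp] lemma length_mirror (x : List Bool) : (mirror x).length = x.length := by simp [mirror]

@[simp] lemma bal_mirror (x : List Bool) : bal (mirror x) = -bal x := by
  induction x with
  | nil => rfl
  | cons b x ih => cases b <;> simp [ih]

lemma mirror_compl_mirror (x : List Bool) : mirror (compl (mirror x)) = compl x := by
  induction x <;> simp_all

lemma isDyck_iff_prefix {x : List Bool} :
    isDyck x ↔ bal x = 0 ∧ ∀ s t, x = s ++ t → 0 ≤ bal s := by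
  have key : ∀ s : List Bool, 0 ≤ bal s ↔ s.count false ≤ s.count true := fun s => by
    simp only [bal, sub_nonneg, Nat.cast_le]
  refine and_congr (by simp [bal, sub_eq_zero]) ⟨fun h s t hx => ?_, fun h n => ?_⟩
  · simpa [hx, key] using h s.length
  · exact (key _).1 (h _ _ (List.take_append_drop n x).symm)

lemma isDyck_iff_suffix {x : List Bool} :
    isDyck x ↔ bal x = 0 ∧ ∀ s t, x = s ++ t → bal t ≤ 0 := by
  rw [isDyck_iff_prefix]
  refine and_congr_right fun h0 => forall₂_congr fun s t => imp_congr_right fun hx => ?_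
  rw [hx, bal_append] at h0
  omega

lemma isDyck_nil : isDyck [] := by simp [isDyck_iff_prefix]

lemma bal_eq_zero_of_isDyck {x : List Bool} (hx : isDyck x) : bal x = 0 :=
  (isDyck_iff_prefix.1 hx).1

lemma bal_nonneg_of_isDyck_append {s t : List Bool} (hx : isDyck (s ++ t)) : 0 ≤ bal s :=
  (isDyck_iff_prefix.1 hx).2 s t rfl

lemma bal_nonpos_of_isDyck_append {s t : List Bool} (hx : isDyck (s ++ t)) : bal t ≤ 0 :=
  (isDyck_iff_suffix.1 hx).2 s t rfl

lemma length_eq_of_isDyck {x : List Bool} (hx : isDyck x) : x.length = 2 * x.count true := by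
  have := two_mul_count_true x
  rw [bal_eq_zero_of_isDyck hx] at this
  omega

lemma not_isDyck_false_cons (x : List Bool) : ¬ isDyck (false :: x) := fun h => by
  simpa using bal_nonneg_of_isDyck_append (s := [false]) h

lemma not_isDyck_append_true_cons (s : List Bool) {v : List Bool} (hv : isDyck v) :
    ¬ isDyck (s ++ true :: v) := fun h => by
  simpa [bal_eq_zero_of_isDyck hv] using bal_nonpos_of_isDyck_append h

lemma isDyck_mirror {x : List Bool} (hx : isDyck x) : isDyck (mirror x) := by
  refine isDyck_iff_prefix.2 ⟨by simp [bal_eq_zero_of_isDyck hx], fun s t h => ?_⟩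
  have : x = mirror t ++ mirror s := by rw [← mirror_append, ← h, mirror_mirror]
  rw [this] at hx
  simpa using bal_nonpos_of_isDyck_append hx

lemma isDyck_node {u v : List Bool} (hu : isDyck u) (hv : isDyck v) :
    isDyck (true :: u ++ false :: v) := by
  refine isDyck_iff_prefix.2 ⟨by simp [bal_eq_zero_of_isDyck hu, bal_eq_zero_of_isDyck hv],
    fun s t h => ?_⟩
  obtain _ | ⟨b, s⟩ := s
  · simp
  simp only [List.cons_append, List.cons_eq_cons] at h
  obtain ⟨rfl, h⟩ := h
  rcases List.append_eq_append_iff.1 h with ⟨a, rfl, ha⟩ | ⟨c, rfl, -⟩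
  · obtain _ | ⟨c, a⟩ := a
    · simp [bal_eq_zero_of_isDyck hu]
    obtain ⟨rfl, rfl⟩ := List.cons_eq_cons.1 ha
    simpa [bal_eq_zero_of_isDyck hu] using bal_nonneg_of_isDyck_append hv
  · have := bal_nonneg_of_isDyck_append hu
    simp only [bal_cons, if_true]
    omega

lemma exists_isDyck_append_false_cons {l : List Bool} (h : bal l < 0) :
    ∃ u v, isDyck u ∧ l = u ++ false :: v := by
  induction hn : l.length using Nat.strong_induction_on generalizing l with
  | _ n ih =>
  subst hn
  obtain _ | ⟨_ | _, t⟩ := l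
  · simp at h
  · exact ⟨[], t, isDyck_nil, rfl⟩
  · -- a leading `1` is matched by the first return of `t` to level `-1`
    obtain ⟨u₁, t₁, hu₁, rfl⟩ := ih _ (by simp) (l := t) (by simp at h; omega) rfl
    have ht₁ : bal t₁ < 0 := by simp [bal_eq_zero_of_isDyck hu₁] at h; omega
    obtain ⟨u₂, v, hu₂, rfl⟩ := ih _ (by simp; omega) ht₁ rfl
    exact ⟨true :: u₁ ++ false :: u₂, v, isDyck_node hu₁ hu₂, by simp⟩

lemma not_isDyck_append_false_cons {u : List Bool} (hu : isDyck u) (a : List Bool) :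
    ¬ isDyck (u ++ false :: a) := fun h => by
  have := bal_nonneg_of_isDyck_append (s := u ++ [false]) (by simpa using h)
  simp [bal_eq_zero_of_isDyck hu] at this

lemma isDyck_append_false_cons_inj {u u' v v' : List Bool} (hu : isDyck u) (hu' : isDyck u')
    (h : u ++ false :: v = u' ++ false :: v') : u = u' ∧ v = v' := by
  have key : ∀ {u a w w' : List Bool}, isDyck u → isDyck (u ++ a) →
      false :: w = a ++ false :: w' → a = [] := fun {u a w w'} hu ha hw => by
    obtain _ | ⟨b, a⟩ := a
    · rfl
    obtain ⟨rfl, -⟩ := List.cons_eq_cons.1 hw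
    exact absurd ha (not_isDyck_append_false_cons hu a)
  suffices u = u' by subst this; simpa using h
  rcases List.append_eq_append_iff.1 h with ⟨a, rfl, ha⟩ | ⟨c, rfl, hc⟩
  · simp [key hu hu' ha]
  · simp [key hu' hu hc]

lemma exists_append_true_cons_isDyck {l : List Bool} (h : 0 < bal l) :
    ∃ z v, isDyck v ∧ l = z ++ true :: v := by
  obtain ⟨u, w, hu, hw⟩ := exists_isDyck_append_false_cons (l := mirror l) (by simpa)
  refine ⟨mirror w, mirror u, isDyck_mirror hu, ?_⟩
  rw [← mirror_mirror l, hw]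
  simp

lemma append_true_cons_isDyck_inj {z z' v v' : List Bool} (hv : isDyck v) (hv' : isDyck v')
    (h : z ++ true :: v = z' ++ true :: v') : z = z' ∧ v = v' := by
  obtain ⟨h₁, h₂⟩ := isDyck_append_false_cons_inj (isDyck_mirror hv) (isDyck_mirror hv')
    (by simpa using congrArg mirror h)
  exact ⟨by simpa using congrArg mirror h₂, by simpa using congrArg mirror h₁⟩

lemma exists_compl_append_true_cons {l : List Bool} (h : 0 < bal l) :
    ∃ u w, isDyck u ∧ l = compl u ++ true :: w := by
  obtain ⟨u, w, hu, hw⟩ := exists_isDyck_append_false_cons (l := compl l) (by simpa)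
  refine ⟨u, compl w, hu, ?_⟩
  rw [← compl_compl l, hw]
  simp

lemma compl_append_true_cons_inj {u u' w w' : List Bool} (hu : isDyck u) (hu' : isDyck u')
    (h : compl u ++ true :: w = compl u' ++ true :: w') : u = u' ∧ w = w' := by
  obtain ⟨h₁, h₂⟩ := isDyck_append_false_cons_inj hu hu' (by simpa using congrArg compl h)
  exact ⟨h₁, by simpa using congrArg compl h₂⟩

lemma exists_node_of_isDyck {x : List Bool} (hx : isDyck x) (hne : x ≠ []) :
    ∃ u v, isDyck u ∧ isDyck v ∧ x = true :: u ++ false :: v := by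
  obtain _ | ⟨_ | _, t⟩ := x
  · exact absurd rfl hne
  · exact absurd hx (not_isDyck_false_cons t)
  have hx0 := bal_eq_zero_of_isDyck hx
  obtain ⟨u, v, hu, rfl⟩ := exists_isDyck_append_false_cons (l := t) (by simp at hx0; omega)
  refine ⟨u, v, hu, isDyck_iff_suffix.2 ⟨?_, fun s r hv => ?_⟩, rfl⟩
  · simpa [bal_eq_zero_of_isDyck hu] using hx0
  · subst hv
    exact bal_nonpos_of_isDyck_append (s := true :: u ++ false :: s) (by simpa using hx)

/-- Induction along the first-return decomposition `x = 1 u 0 v`, shaped like the recursion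
defining `π`. -/
lemma isDyck_induction {P : (x : List Bool) → isDyck x → Prop} (nil : P [] isDyck_nil)
    (node : ∀ u v (hu : isDyck u) (hv : isDyck v), P (mirror u) (isDyck_mirror hu) → P v hv →
      P (true :: u ++ false :: v) (isDyck_node hu hv)) :
    ∀ x (hx : isDyck x), P x hx := by
  intro x hx
  induction hn : x.length using Nat.strong_induction_on generalizing x with
  | _ n ih =>
  subst hn
  rcases eq_or_ne x [] with rfl | hne
  · exact nil
  obtain ⟨u, v, hu, hv, rfl⟩ := exists_node_of_isDyck hx hne
  exact node u v hu hv (ih _ (by simp) _ (isDyck_mirror hu) rfl) (ih _ (by simp; omega) _ hv rfl)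

@[simp] lemma length_flipBit (y : List Bool) (a : ℕ) : (flipBit y a).length = y.length := by
  simp [flipBit]

@[simp] lemma length_foldl_flipBit (y : List Bool) (l : List ℕ) :
    (l.foldl flipBit y).length = y.length := by
  induction l generalizing y <;> simp_all

@[simp] lemma flipBit_cons_one (b : Bool) (y : List Bool) : flipBit (b :: y) 1 = (!b) :: y := by
  simp [flipBit]

lemma flipBit_cons_succ (b : Bool) (y : List Bool) {a : ℕ} (ha : 1 ≤ a) :
    flipBit (b :: y) (a + 1) = b :: flipBit y a := by
  obtain ⟨a, rfl⟩ := Nat.exists_eq_add_of_le' ha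
  simp [flipBit]

lemma flipBit_append_left (s t : List Bool) {a : ℕ} (ha : 1 ≤ a) (has : a ≤ s.length) :
    flipBit (s ++ t) a = flipBit s a ++ t := by
  have hlt : a - 1 < s.length := by omega
  simp only [flipBit, List.set_append, if_pos hlt, List.getD_append _ _ _ _ hlt]

lemma flipBit_append_right (s t : List Bool) {a : ℕ} (ha : 1 ≤ a) :
    flipBit (s ++ t) (s.length + a) = s ++ flipBit t a := by
  obtain ⟨a, rfl⟩ := Nat.exists_eq_add_of_le' ha
  simp [flipBit, List.getElem?_append_right, ← add_assoc]

lemma flipBit_mirror {y : List Bool} {a : ℕ} (ha : 1 ≤ a) (hay : a ≤ y.length) :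
    flipBit (mirror y) (y.length + 1 - a) = mirror (flipBit y a) := by
  induction y generalizing a with
  | nil => simp at hay; omega
  | cons b y ih =>
    obtain rfl | ⟨a, ha', rfl⟩ : a = 1 ∨ ∃ a', 1 ≤ a' ∧ a = a' + 1 := by
      rcases a with _ | _ | a <;> simp_all
    · simp only [List.length_cons, add_tsub_cancel_right, mirror_cons]
      simpa using flipBit_append_right (mirror y) [!b] le_rfl
    · simp only [List.length_cons] at hay
      rw [flipBit_cons_succ _ _ ha', mirror_cons, mirror_cons, ← ih ha' (by omega),
        List.length_cons, ← flipBit_append_left _ _ (by omega) (by simp; omega)]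
      congr 1
      omega

lemma flipBit_true_cons_mirror_append {z : List Bool} (v : List Bool) {b : ℕ}
    (hb : 1 ≤ b) (hbz : b ≤ z.length) :
    flipBit (true :: (mirror z ++ true :: v)) (z.length + 2 - b)
      = true :: (mirror (flipBit z b) ++ true :: v) := by
  rw [show z.length + 2 - b = (z.length + 1 - b) + 1 by omega, flipBit_cons_succ _ _ (by omega),
    flipBit_append_left _ _ (by omega) (by simp; omega), flipBit_mirror hb hbz]

variable {π : List Bool → List ℕ}

lemma length_pi (hπ : IsPiFun π) {x : List Bool} (hx : isDyck x) : (π x).length = x.length := by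
  induction x, hx using isDyck_induction with
  | nil => simp [hπ.1]
  | node u v hu hv ihu ihv =>
    simp only [hπ.2 u v hu hv, List.length_cons, List.length_append, List.length_map, ihu, ihv,
      length_mirror]

lemma mem_pi (hπ : IsPiFun π) {x : List Bool} (hx : isDyck x) {a : ℕ} (ha : a ∈ π x) :
    1 ≤ a ∧ a ≤ x.length := by
  induction x, hx using isDyck_induction generalizing a with
  | nil => simp [hπ.1] at ha
  | node u v hu hv ihu ihv =>
    simp only [hπ.2 u v hu hv, List.mem_cons, List.mem_append, List.mem_map] at ha
    simp only [List.cons_append, List.length_cons, List.length_append]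
    rcases ha with (rfl | ⟨b, hb, rfl⟩) | rfl | ⟨b, hb, rfl⟩
    · omega
    · have := ihu hb
      rw [length_mirror] at this
      omega
    · omega
    · have := ihv hb
      omega

lemma foldl_take_pi_node_left (hπ : IsPiFun π) {u v : List Bool} (hu : isDyck u) (hv : isDyck v)
    {j : ℕ} (hj : j ≤ u.length) :
    ((π (true :: u ++ false :: v)).take (j + 1)).foldl flipBit (true :: u ++ false :: v)
      = true :: (mirror (((π (mirror u)).take j).foldl flipBit (mirror u)) ++ true :: v) := by
  have hflip : flipBit (true :: u ++ false :: v) (u.length + 2)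
      = true :: (mirror (mirror u) ++ true :: v) := by
    simpa using flipBit_append_right (true :: u) (false :: v) le_rfl
  rw [hπ.2 u v hu hv, List.take_append_of_le_length (by simpa [length_pi hπ (isDyck_mirror hu)]),
    List.take_succ_cons, List.foldl_cons, hflip, ← List.map_take]
  refine List.foldl_map_semiconj (f := flipBit) (g := fun z => true :: (mirror z ++ true :: v))
    (fun z => z.length = u.length) (fun z hz _ _ => by simpa)
    (fun z hz a ha => ?_) (length_mirror u)
  have := mem_pi hπ (isDyck_mirror hu) (List.mem_of_mem_take ha)
  rw [length_mirror] at this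
  rw [← hz, flipBit_true_cons_mirror_append v this.1 (hz ▸ this.2)]

lemma foldl_take_pi_node_right (hπ : IsPiFun π) {u v : List Bool} (hu : isDyck u) (hv : isDyck v)
    (j : ℕ) :
    ((π (true :: u ++ false :: v)).take (u.length + 2 + j)).foldl flipBit (true :: u ++ false :: v)
      = false :: (mirror ((π (mirror u)).foldl flipBit (mirror u))
          ++ true :: ((π v).take j).foldl flipBit v) := by
  have hlen : (π (mirror u)).length = u.length := by
    rw [length_pi hπ (isDyck_mirror hu), length_mirror]
  have hsplit : (π (true :: u ++ false :: v)).take (u.length + 2 + j)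
      = (π (true :: u ++ false :: v)).take (u.length + 1)
          ++ 1 :: ((π v).take j).map (fun a => u.length + 2 + a) := by
    have hL : ((u.length + 2) :: (π (mirror u)).map (fun a => u.length + 2 - a)).length
        = u.length + 1 := by simp [hlen]
    rw [hπ.2 u v hu hv, List.take_left' hL,
      show u.length + 2 + j = u.length + 1 + (j + 1) by omega, ← hL, List.take_length_add_append,
      List.take_succ_cons, List.map_take]
  rw [hsplit, List.foldl_append, foldl_take_pi_node_left hπ hu hv le_rfl,
    List.take_of_length_le (by rw [hlen]), List.foldl_cons, flipBit_cons_one, Bool.not_true]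
  set F := (π (mirror u)).foldl flipBit (mirror u)
  have hF : F.length = u.length := by simp [F]
  refine List.foldl_map_semiconj (f := flipBit) (g := fun z => false :: (mirror F ++ true :: z))
    (fun _ => True) (fun _ _ _ _ => trivial) (fun z _ a ha => ?_) trivial
  have := (mem_pi hπ hv (List.mem_of_mem_take ha)).1
  simpa [hF] using flipBit_append_right (false :: mirror F ++ [true]) z this

lemma foldl_pi (hπ : IsPiFun π) {x : List Bool} (hx : isDyck x) :
    (π x).foldl flipBit x = compl x := by
  induction x, hx using isDyck_induction with
  | nil => simp [hπ.1]
  | node u v hu hv ihu ihv =>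
    have := foldl_take_pi_node_right hπ hu hv v.length
    rw [List.take_of_length_le (length_pi hπ hv).le,
      List.take_of_length_le (by rw [length_pi hπ (isDyck_node hu hv)]; simp; omega),
      ihu, ihv, mirror_compl_mirror] at this
    rw [this]
    simp

lemma getD_pathOf (hπ : IsPiFun π) {x : List Bool} (hx : isDyck x) {i : ℕ} (hi : i ≤ x.length) :
    (pathOf π x).getD i [] = ((π x).take i).foldl flipBit x := by
  rw [pathOf, List.getD_eq_getElem _ _ (by simp [length_pi hπ hx]; omega), List.getElem_scanl]

lemma getD_pathOf_zero (x : List Bool) : (pathOf π x).getD 0 [] = x := by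
  simp [pathOf]

lemma getD_pathOf_node_succ (hπ : IsPiFun π) {u v : List Bool} (hu : isDyck u) (hv : isDyck v)
    {j : ℕ} (hj : j ≤ u.length) :
    (pathOf π (true :: u ++ false :: v)).getD (j + 1) []
      = true :: (mirror ((pathOf π (mirror u)).getD j []) ++ true :: v) := by
  rw [getD_pathOf hπ (isDyck_node hu hv) (by simp; omega),
    getD_pathOf hπ (isDyck_mirror hu) (by simpa), foldl_take_pi_node_left hπ hu hv hj]

lemma getD_pathOf_node_add (hπ : IsPiFun π) {u v : List Bool} (hu : isDyck u) (hv : isDyck v)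
    {j : ℕ} (hj : j ≤ v.length) :
    (pathOf π (true :: u ++ false :: v)).getD (u.length + 2 + j) []
      = false :: (compl u ++ true :: (pathOf π v).getD j []) := by
  rw [getD_pathOf hπ (isDyck_node hu hv) (by simp; omega), getD_pathOf hπ hv hj,
    foldl_take_pi_node_right hπ hu hv, foldl_pi hπ (isDyck_mirror hu), mirror_compl_mirror]

lemma getD_pathOf_node_cases (hπ : IsPiFun π) {u v : List Bool} (hu : isDyck u) (hv : isDyck v)
    {i : ℕ} (hi : i ≤ u.length + v.length + 2) {y : List Bool}
    (hy : (pathOf π (true :: u ++ false :: v)).getD i [] = y) :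
    (i = 0 ∧ y = true :: u ++ false :: v)
    ∨ (∃ j ≤ u.length, i = j + 1 ∧
        y = true :: (mirror ((pathOf π (mirror u)).getD j []) ++ true :: v))
    ∨ (∃ j ≤ v.length, i = u.length + 2 + j ∧
        y = false :: (compl u ++ true :: (pathOf π v).getD j [])) := by
  subst hy
  rcases Nat.lt_or_ge i (u.length + 2) with h | h
  · obtain _ | j := i
    · exact Or.inl ⟨rfl, getD_pathOf_zero _⟩
    · exact Or.inr (Or.inl ⟨j, by omega, rfl, getD_pathOf_node_succ hπ hu hv (by omega)⟩)
  · obtain ⟨j, rfl⟩ := Nat.exists_eq_add_of_le h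
    exact Or.inr (Or.inr ⟨j, by omega, rfl, getD_pathOf_node_add hπ hu hv (by omega)⟩)

lemma isDyck_getD_pathOf_iff (hπ : IsPiFun π) {x : List Bool} (hx : isDyck x) {i : ℕ}
    (hi : i ≤ x.length) : isDyck ((pathOf π x).getD i []) ↔ i = 0 := by
  refine ⟨fun hy => ?_, by rintro rfl; rwa [getD_pathOf_zero]⟩
  rcases eq_or_ne x [] with rfl | hne
  · simpa using hi
  obtain ⟨u, v, hu, hv, rfl⟩ := exists_node_of_isDyck hx hne
  rcases getD_pathOf_node_cases hπ hu hv (by simp at hi; omega) rfl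
    with ⟨hi0, -⟩ | ⟨j, -, -, hj⟩ | ⟨j, -, -, hj⟩
  · exact hi0
  · exact absurd (hj ▸ hy) (not_isDyck_append_true_cons (true :: _) hv)
  · exact absurd (hj ▸ hy) (not_isDyck_false_cons _)

lemma eq_of_getD_pathOf_eq (hπ : IsPiFun π) {x x' : List Bool} (hx : isDyck x)
    (hx' : isDyck x') {i i' : ℕ} (hi : i ≤ x.length) (hi' : i' ≤ x'.length)
    (h : (pathOf π x).getD i [] = (pathOf π x').getD i' []) : x = x' ∧ i = i' := by
  induction hn : x.length using Nat.strong_induction_on generalizing x x' i i' with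
  | _ n ih =>
  subst hn
  by_cases hy : isDyck ((pathOf π x).getD i [])
  · obtain rfl := (isDyck_getD_pathOf_iff hπ hx hi).1 hy
    obtain rfl := (isDyck_getD_pathOf_iff hπ hx' hi').1 (h ▸ hy)
    rw [getD_pathOf_zero, getD_pathOf_zero] at h
    exact ⟨h, rfl⟩
  have hi0 : i ≠ 0 := fun h0 => hy ((isDyck_getD_pathOf_iff hπ hx hi).2 h0)
  have hi0' : i' ≠ 0 := fun h0 => hy (h ▸ (isDyck_getD_pathOf_iff hπ hx' hi').2 h0)
  obtain ⟨u, v, hu, hv, rfl⟩ := exists_node_of_isDyck hx (by rintro rfl; simp at hi; omega)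
  obtain ⟨u', v', hu', hv', rfl⟩ := exists_node_of_isDyck hx' (by rintro rfl; simp at hi'; omega)
  rcases getD_pathOf_node_cases hπ hu hv (by simp at hi; omega) rfl
    with ⟨rfl, -⟩ | ⟨j, hj, rfl, hy⟩ | ⟨j, hj, rfl, hy⟩ <;>
  rcases getD_pathOf_node_cases hπ hu' hv' (by simp at hi'; omega) rfl
    with ⟨rfl, -⟩ | ⟨j', hj', rfl, hy'⟩ | ⟨j', hj', rfl, hy'⟩ <;>
  first | exact absurd rfl hi0 | exact absurd rfl hi0' | rw [hy, hy'] at h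
  · obtain ⟨hw, rfl⟩ := append_true_cons_isDyck_inj hv hv' (List.cons_injective h)
    obtain ⟨hmu, rfl⟩ := ih _ (by simp) (isDyck_mirror hu) (isDyck_mirror hu')
      (by simpa) (by simpa) (mirror_inj.1 hw) rfl
    rw [mirror_inj.1 hmu]
    exact ⟨rfl, rfl⟩
  · simp at h
  · simp at h
  · obtain ⟨rfl, hw⟩ := compl_append_true_cons_inj hu hu' (List.cons_injective h)
    obtain ⟨rfl, rfl⟩ := ih _ (by simp; omega) hv hv' hj hj' hw rfl
    exact ⟨rfl, rfl⟩

lemma exists_getD_pathOf_eq (hπ : IsPiFun π) {k : ℕ} {y : List Bool} (hy : inB k y) :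
    ∃ x i, isDyck x ∧ x.length = 2 * k ∧ i ≤ 2 * k ∧ (pathOf π x).getD i [] = y := by
  induction k using Nat.strong_induction_on generalizing y with
  | _ k ih =>
  obtain ⟨hlen, hbal⟩ := (inB_iff k y).1 hy
  by_cases hyD : isDyck y
  · exact ⟨y, 0, hyD, hlen, Nat.zero_le _, getD_pathOf_zero y⟩
  obtain _ | ⟨_ | _, t⟩ := y
  · exact absurd isDyck_nil hyD
  · obtain ⟨u, w, hu, rfl⟩ := exists_compl_append_true_cons (l := t) (by simp at hbal; omega)
    have hu₂ := length_eq_of_isDyck hu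
    simp only [List.length_cons, List.length_append, length_compl] at hlen
    obtain ⟨v, j, hv, hvlen, hj, rfl⟩ := ih (k - 1 - u.count true) (by omega)
      ((inB_iff _ w).2 ⟨by omega, by simp [bal_eq_zero_of_isDyck hu] at hbal; omega⟩)
    refine ⟨true :: u ++ false :: v, u.length + 2 + j, isDyck_node hu hv, by simp; omega,
      by omega, ?_⟩
    rw [getD_pathOf_node_add hπ hu hv (by omega)]
  · obtain ⟨s, r, hsr, hr⟩ : ∃ s r, true :: t = s ++ r ∧ 0 < bal r := by
      by_contra! hsuf
      exact hyD (isDyck_iff_suffix.2 ⟨by have := hsuf [] _ rfl; omega, hsuf⟩)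
    obtain ⟨z, v, hv, rfl⟩ := exists_append_true_cons_isDyck hr
    rw [← List.append_assoc] at hsr
    generalize s ++ z = z at hsr
    obtain _ | ⟨c, z⟩ := z
    · -- `y = 1 v` would have balance `1`
      simp [hsr, bal_eq_zero_of_isDyck hv] at hbal
    simp only [List.cons_append, List.cons.injEq] at hsr
    obtain ⟨rfl, rfl⟩ := hsr
    have hv₂ := length_eq_of_isDyck hv
    simp only [List.length_cons, List.length_append] at hlen
    obtain ⟨m, j, hm, hmlen, hj, hmz⟩ := ih (k - 1 - v.count true) (by omega)
      ((inB_iff _ (mirror z)).2 ⟨by simp; omega,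
        by simp [bal_eq_zero_of_isDyck hv] at hbal ⊢; omega⟩)
    refine ⟨true :: mirror m ++ false :: v, j + 1, isDyck_node (isDyck_mirror hm) hv,
      by simp; omega, by omega, ?_⟩
    rw [getD_pathOf_node_succ hπ (isDyck_mirror hm) hv (by simp; omega), mirror_mirror, hmz,
      mirror_mirror]

end DyckPath

theorem stmt_7_general (π : List Bool → List ℕ) (hπ : IsPiFun π) (k : ℕ)
    (y : List Bool) (hy : inB k y) :
    ∃! p : List Bool × ℕ,
      isDyck p.1 ∧ p.1.length = 2*k ∧ p.2 ≤ 2*k ∧ (pathOf π p.1).getD p.2 [] = y := by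
  obtain ⟨x, i, hx, hxk, hik, rfl⟩ := DyckPath.exists_getD_pathOf_eq hπ hy
  refine ⟨(x, i), ⟨hx, hxk, hik, rfl⟩, fun ⟨x', i'⟩ ⟨hx', hx'k, hi'k, hx'y⟩ => ?_⟩
  obtain ⟨rfl, rfl⟩ := DyckPath.eq_of_getD_pathOf_eq hπ hx' hx (by omega) (by omega) hx'y
  rfl

theorem stmt_7 (π : List Bool → List ℕ) (hπ : IsPiFun π) (k : ℕ) (hk : 1 ≤ k)
    (y : List Bool) (hy : inB k y) :
    ∃! p : List Bool × ℕ,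
      isDyck p.1 ∧ p.1.length = 2*k ∧ p.2 ≤ 2*k ∧ (pathOf π p.1).getD p.2 [] = y :=
  stmt_7_general π hπ k y hy
end

section
/- Every bitstring y of length 2k (k ≥ 1) with weight k or k+1 satisfies exactly one of the following: (1) y = 1u0v with u ∈ D_{ℓ−1} and v ∈ D_{k−ℓ} for some ℓ ∈ [k]; (2) y = 1w1v with w̄^rev ∈ B_{ℓ−1} and v ∈ D_{k−ℓ} for some ℓ ∈ [k]; (3) y = 0ū1w with u ∈ D_{ℓ−1} and w ∈ B_{k−ℓ} for some ℓ ∈ [k]; and in each case the decomposition is unique. -/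
/-- Case (1): `y = 1u0v` with `u ∈ D_{ℓ-1}` and `v ∈ D_{k-ℓ}`. -/
def case1 (k : ℕ) (y : List Bool) (t : ℕ × List Bool × List Bool) : Prop :=
  1 ≤ t.1 ∧ t.1 ≤ k ∧ isDyck t.2.1 ∧ t.2.1.length = 2*(t.1-1) ∧
    isDyck t.2.2 ∧ t.2.2.length = 2*(k-t.1) ∧ y = true :: t.2.1 ++ false :: t.2.2

/-- Case (2): `y = 1w1v` with `w̄^rev ∈ B_{ℓ-1}` and `v ∈ D_{k-ℓ}`. -/
def case2 (k : ℕ) (y : List Bool) (t : ℕ × List Bool × List Bool) : Prop :=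
  1 ≤ t.1 ∧ t.1 ≤ k ∧ inB (t.1-1) (mirror t.2.1) ∧
    isDyck t.2.2 ∧ t.2.2.length = 2*(k-t.1) ∧ y = true :: t.2.1 ++ true :: t.2.2

/-- Case (3): `y = 0ū1w` with `u ∈ D_{ℓ-1}` and `w ∈ B_{k-ℓ}`. -/
def case3 (k : ℕ) (y : List Bool) (t : ℕ × List Bool × List Bool) : Prop :=
  1 ≤ t.1 ∧ t.1 ≤ k ∧ isDyck t.2.1 ∧ t.2.1.length = 2*(t.1-1) ∧
    inB (k-t.1) t.2.2 ∧ y = false :: compl t.2.1 ++ true :: t.2.2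

/-!
With `balance x = #1s - #0s`, a word some prefix of which has negative balance factors uniquely
as `d ++ 0 :: r` with `d` a Dyck word: `d 0` is its shortest prefix of balance `-1`. All three
decompositions are instances of this factorization: case (1) of the tail of a Dyck word `y = 1z`,
case (3) of the tail of `ȳ = 1 u 0 w̄`, and case (2) of `mirror y`, since `y = 1w1v` exactly when
`mirror y = (mirror v) 0 (mirror w) 0`, and `mirror y` has a negative prefix exactly when `y` is
not Dyck (its balance is `0` or `-2`). Cases (1) and (2) are told apart by whether `y` is Dyck,
case (3) by the first bit.
-/

namespace DyckDecomposition

def balance (x : List Bool) : ℤ := x.count true - x.count false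

@[simp] lemma balance_nil : balance [] = 0 := by simp [balance]

@[simp] lemma balance_cons_true (x : List Bool) : balance (true :: x) = balance x + 1 := by
  simp [balance]; ring

@[simp] lemma balance_cons_false (x : List Bool) : balance (false :: x) = balance x - 1 := by
  simp [balance]; ring

@[simp] lemma balance_append (x y : List Bool) : balance (x ++ y) = balance x + balance y := by
  simp [balance, List.count_append]; ring

@[simp] lemma balance_reverse (x : List Bool) : balance x.reverse = balance x := by
  simp [balance, List.count_reverse]

lemma balance_add_length (x : List Bool) : balance x + x.length = 2 * x.count true := by
  induction x with
  | nil => simp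
  | cons b x ih => cases b <;> simp <;> omega

@[simp] lemma compl_cons (b : Bool) (x : List Bool) : compl (b :: x) = (!b) :: compl x := rfl

@[simp] lemma compl_append (x y : List Bool) : compl (x ++ y) = compl x ++ compl y :=
  List.map_append

@[simp] lemma compl_compl (x : List Bool) : compl (compl x) = x := by
  simp [_root_.compl, Function.comp_def]

@[simp] lemma length_compl (x : List Bool) : (compl x).length = x.length := List.length_map _

@[simp] lemma balance_compl (x : List Bool) : balance (compl x) = -balance x := by
  induction x with
  | nil => rfl
  | cons b x ih => cases b <;> simp [ih] <;> ring

lemma mirror_eq_compl_reverse (x : List Bool) : mirror x = compl x.reverse := rfl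

@[simp] lemma mirror_append (x y : List Bool) : mirror (x ++ y) = mirror y ++ mirror x := by
  simp [mirror]

@[simp] lemma mirror_cons (b : Bool) (x : List Bool) : mirror (b :: x) = mirror x ++ [!b] := by
  simp [mirror]

@[simp] lemma mirror_mirror (x : List Bool) : mirror (mirror x) = x := by
  simp [mirror, List.map_reverse, Function.comp_def]

@[simp] lemma length_mirror (x : List Bool) : (mirror x).length = x.length := by simp [mirror]

@[simp] lemma balance_mirror (x : List Bool) : balance (mirror x) = -balance x := by
  simp [mirror_eq_compl_reverse]

lemma take_mirror (x : List Bool) (n : ℕ) :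
    (mirror x).take n = mirror (x.drop (x.length - n)) := by
  simp [mirror, List.take_reverse]

lemma isDyck_iff_balance (x : List Bool) :
    isDyck x ↔ balance x = 0 ∧ ∀ n, 0 ≤ balance (x.take n) := by
  simp only [isDyck, balance, sub_eq_zero, sub_nonneg, Nat.cast_inj, Nat.cast_le, eq_comm]

lemma inB_iff_balance (j : ℕ) (x : List Bool) :
    inB j x ↔ x.length = 2 * j ∧ (balance x = 0 ∨ balance x = 2) := by
  have := balance_add_length x
  unfold inB
  constructor <;> rintro ⟨hl, h | h⟩ <;> refine ⟨hl, ?_⟩ <;> omega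

lemma isDyck_append {x y : List Bool} (hx : isDyck x) (hy : isDyck y) : isDyck (x ++ y) := by
  rw [isDyck_iff_balance] at *
  refine ⟨by simp [hx.1, hy.1], fun n => ?_⟩
  rw [List.take_append, balance_append]
  exact add_nonneg (hx.2 n) (hy.2 _)

lemma isDyck_true_cons_append_false {u : List Bool} (hu : isDyck u) :
    isDyck (true :: u ++ [false]) := by
  rw [isDyck_iff_balance] at *
  refine ⟨by simp [hu.1], fun n => ?_⟩
  cases n with
  | zero => simp
  | succ n =>
    rw [List.cons_append, List.take_succ_cons, balance_cons_true, List.take_append,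
      balance_append]
    have := hu.2 n
    cases n - u.length <;> simp <;> omega

lemma isDyck_mirror {x : List Bool} (hx : isDyck x) : isDyck (mirror x) := by
  rw [isDyck_iff_balance] at *
  refine ⟨by simp [hx.1], fun n => ?_⟩
  have hsplit := balance_append (x.take (x.length - n)) (x.drop (x.length - n))
  rw [List.take_append_drop, hx.1] at hsplit
  have := hx.2 (x.length - n)
  rw [take_mirror, balance_mirror]
  omega

lemma isDyck_of_isDyck_append {x y : List Bool} (h : isDyck (x ++ y)) (hx : balance x = 0) :
    isDyck y := by
  rw [isDyck_iff_balance] at *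
  refine ⟨by simpa [hx] using h.1, fun n => ?_⟩
  simpa [List.take_length_add_append, hx] using h.2 (x.length + n)

lemma not_isDyck_append_false_cons {d : List Bool} (hd : balance d = 0) (r : List Bool) :
    ¬ isDyck (d ++ false :: r) := by
  rw [isDyck_iff_balance]
  rintro ⟨-, h⟩
  have := h (d.length + 1)
  simp [List.take_length_add_append, hd] at this

lemma isDyck_append_false_cons_inj {d d' r r' : List Bool} (hd : isDyck d) (hd' : isDyck d')
    (h : d ++ false :: r = d' ++ false :: r') : d = d' ∧ r = r' := by
  rcases List.append_eq_append_iff.1 h with ⟨s, rfl, hs⟩ | ⟨s, rfl, hs⟩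
  · rcases s with _ | ⟨b, s⟩
    · simpa using hs
    · obtain ⟨rfl, -⟩ : false = b ∧ r = s ++ false :: r' := by simpa using hs
      exact absurd hd' (not_isDyck_append_false_cons ((isDyck_iff_balance d).1 hd).1 s)
  · rcases s with _ | ⟨b, s⟩
    · simpa using hs.symm
    · obtain ⟨rfl, -⟩ : false = b ∧ r' = s ++ false :: r := by simpa using hs
      exact absurd hd (not_isDyck_append_false_cons ((isDyck_iff_balance d').1 hd').1 s)

lemma exists_isDyck_append_false_cons {x : List Bool} (h : ∃ n, balance (x.take n) < 0) :
    ∃ d r, isDyck d ∧ x = d ++ false :: r := by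
  have hmin := fun m => Nat.find_min (m := m) h
  obtain ⟨m, hm⟩ : ∃ m, Nat.find h = m + 1 := by
    refine Nat.exists_eq_add_one_of_ne_zero fun h0 => ?_
    simpa [h0] using Nat.find_spec h
  have hfind := Nat.find_spec h
  rw [hm] at hfind hmin
  have hlt : m < x.length := by
    by_contra hle
    rw [List.take_of_length_le (by omega)] at hfind
    exact hmin x.length (by omega) (by rwa [List.take_of_length_le le_rfl])
  have hprefix : ∀ n, 0 ≤ balance ((x.take m).take n) := fun n => by
    rw [List.take_take]; exact not_lt.1 (hmin _ (by omega))
  have hm0 := hprefix m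
  rw [List.take_take, min_self] at hm0
  rw [List.take_add_one, List.getElem?_eq_getElem hlt, Option.toList_some, balance_append]
    at hfind
  obtain ⟨hxm, hbal⟩ : x[m] = false ∧ balance (x.take m) = 0 := by
    rcases hb : x[m] <;> simp [hb] at hfind ⊢ <;> omega
  refine ⟨x.take m, x.drop (m + 1), (isDyck_iff_balance _).2 ⟨hbal, hprefix⟩, ?_⟩
  rw [← hxm, ← List.drop_eq_getElem_cons hlt, List.take_append_drop]

lemma mirror_true_cons_append_true_cons (w v : List Bool) :
    mirror (true :: w ++ true :: v) = mirror v ++ false :: (mirror w ++ [false]) := by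
  simp

section Cases

variable {k : ℕ} {y z : List Bool} {t : ℕ × List Bool × List Bool}

lemma head?_of_case1 (h : case1 k y t) : y.head? = some true := by
  rw [h.2.2.2.2.2.2]; rfl

lemma head?_of_case2 (h : case2 k y t) : y.head? = some true := by
  rw [h.2.2.2.2.2]; rfl

lemma head?_of_case3 (h : case3 k y t) : y.head? = some false := by
  rw [h.2.2.2.2.2]; rfl

lemma isDyck_of_case1 (h : case1 k y t) : isDyck y := by
  obtain ⟨-, -, hu, -, hv, -, rfl⟩ := h
  simpa using isDyck_append (isDyck_true_cons_append_false hu) hv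

lemma not_isDyck_of_case2 (h : case2 k y t) : ¬ isDyck y := by
  obtain ⟨-, -, -, hv, -, rfl⟩ := h
  intro hy
  have hmirror := isDyck_mirror hy
  rw [mirror_true_cons_append_true_cons] at hmirror
  exact not_isDyck_append_false_cons (by simp [((isDyck_iff_balance _).1 hv).1]) _ hmirror

lemma existsUnique_case1 (hy : inB k (true :: z)) (hD : isDyck (true :: z)) :
    ∃! t, case1 k (true :: z) t := by
  have hz : balance z = -1 := by linarith [((isDyck_iff_balance _).1 hD).1, balance_cons_true z]
  obtain ⟨u, v, hu, rfl⟩ :=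
    exists_isDyck_append_false_cons (x := z) ⟨z.length, by simp [hz]⟩
  have hbu := ((isDyck_iff_balance u).1 hu).1
  have hv : isDyck v :=
    isDyck_of_isDyck_append (x := true :: u ++ [false]) (by simpa using hD) (by simp [hbu])
  have hlen := hy.1
  have hu_even := balance_add_length u
  simp only [List.length_cons, List.length_append] at hlen
  refine ⟨(u.length / 2 + 1, u, v), ⟨by omega, by omega, hu, by dsimp only; omega, hv,
    by dsimp only; omega, rfl⟩, ?_⟩
  rintro ⟨ℓ, u', v'⟩ ⟨hℓ, -, hu', hlen', -, -, heq⟩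
  obtain ⟨rfl, rfl⟩ := isDyck_append_false_cons_inj hu' hu (by simpa using heq.symm)
  simp only at hℓ hlen'
  simp only [Prod.mk.injEq, and_true]
  omega

lemma existsUnique_case3 (hy : inB k (false :: z)) : ∃! t, case3 k (false :: z) t := by
  rw [inB_iff_balance] at hy
  obtain ⟨hlen, hbal⟩ := hy
  obtain ⟨u, r, hu, hzr⟩ := exists_isDyck_append_false_cons (x := compl z)
    ⟨(compl z).length, by simp only [List.take_length, balance_compl]; simp at hbal; omega⟩
  obtain rfl : z = compl u ++ true :: compl r := by rw [← compl_compl z, hzr]; simp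
  have hbu := ((isDyck_iff_balance u).1 hu).1
  have hu_even := balance_add_length u
  simp only [List.length_cons, List.length_append, length_compl] at hlen
  refine ⟨(u.length / 2 + 1, u, compl r),
    ⟨by omega, by omega, hu, by dsimp only; omega, ?_, rfl⟩, ?_⟩
  · rw [inB_iff_balance]
    simp [hbu] at hbal ⊢
    omega
  rintro ⟨ℓ, u', w'⟩ ⟨hℓ, -, hu', hlen', -, heq⟩
  have hcompl := congrArg _root_.compl heq
  simp only [compl_cons, compl_append, compl_compl, Bool.not_false, Bool.not_true,
    List.cons_append, List.cons.injEq, true_and] at hcompl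
  obtain ⟨rfl, hw⟩ := isDyck_append_false_cons_inj hu' hu hcompl.symm
  simp only at hℓ hlen'
  simp only [Prod.mk.injEq, ← hw, compl_compl, and_true]
  omega

lemma existsUnique_case2 (hy : inB k (true :: z)) (hD : ¬ isDyck (true :: z)) :
    ∃! t, case2 k (true :: z) t := by
  rw [inB_iff_balance] at hy
  obtain ⟨hlen, hbal⟩ := hy
  have hneg : ∃ n, balance ((mirror (true :: z)).take n) < 0 := by
    rcases hbal with h0 | h2
    · by_contra! hnn
      rw [← mirror_mirror (true :: z)] at hD
      exact hD (isDyck_mirror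
        ((isDyck_iff_balance _).2 ⟨by rw [balance_mirror, h0, neg_zero], hnn⟩))
    · exact ⟨_, by rw [List.take_length, balance_mirror, h2]; norm_num⟩
  obtain ⟨d, r, hd, hdr⟩ := exists_isDyck_append_false_cons hneg
  have hbd := ((isDyck_iff_balance d).1 hd).1
  rcases List.eq_nil_or_concat' r with rfl | ⟨r', b, rfl⟩
  · have := congrArg balance hdr
    simp [hbd] at this hbal
    omega
  obtain ⟨rfl, rfl⟩ : b = false ∧ mirror r' ++ true :: mirror d = z := by
    simpa using (congrArg mirror hdr).symm
  have hd_even := balance_add_length d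
  simp only [List.length_cons, List.length_append, length_mirror] at hlen
  refine ⟨(k - d.length / 2, mirror r', mirror d),
    ⟨by dsimp only; omega, by dsimp only; omega, ?_, isDyck_mirror hd, by simp; omega, rfl⟩,
    ?_⟩
  · rw [mirror_mirror, inB_iff_balance]
    simp [hbd] at hbal ⊢
    omega
  rintro ⟨ℓ, w', v'⟩ ⟨hℓ1, hℓk, -, hv', hlen', heq⟩
  dsimp only at hℓ1 hℓk hv' hlen' heq
  have hmirror := congrArg mirror heq
  rw [hdr, mirror_true_cons_append_true_cons] at hmirror
  obtain ⟨rfl, hw⟩ := isDyck_append_false_cons_inj (isDyck_mirror hv') hd hmirror.symm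
  simp only [Prod.mk.injEq, mirror_mirror, and_true, length_mirror]
  exact ⟨by omega, by rw [← List.append_cancel_right hw, mirror_mirror]⟩

end Cases

end DyckDecomposition

open DyckDecomposition in
theorem stmt_8 (k : ℕ) (hk : 1 ≤ k) (y : List Bool) (hy : inB k y) :
    ((∃! t, case1 k y t) ∧ ¬(∃ t, case2 k y t) ∧ ¬(∃ t, case3 k y t))
    ∨ (¬(∃ t, case1 k y t) ∧ (∃! t, case2 k y t) ∧ ¬(∃ t, case3 k y t))
    ∨ (¬(∃ t, case1 k y t) ∧ ¬(∃ t, case2 k y t) ∧ (∃! t, case3 k y t)) := by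
  obtain ⟨b, z, rfl⟩ : ∃ b z, y = b :: z := by
    refine List.exists_cons_of_ne_nil fun h => ?_
    simp [h, inB] at hy
    omega
  cases b with
  | false =>
    exact Or.inr <| Or.inr ⟨fun ⟨_, h⟩ => by simpa using head?_of_case1 h,
      fun ⟨_, h⟩ => by simpa using head?_of_case2 h, existsUnique_case3 hy⟩
  | true =>
    have not_case3 : ¬∃ t, case3 k (true :: z) t :=
      fun ⟨_, h⟩ => by simpa using head?_of_case3 h
    by_cases hD : isDyck (true :: z)
    · exact Or.inl
        ⟨existsUnique_case1 hy hD, fun ⟨_, h⟩ => not_isDyck_of_case2 h hD, not_case3⟩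
    · exact Or.inr <| Or.inl
        ⟨fun ⟨_, h⟩ => hD (isDyck_of_case1 h), existsUnique_case2 hy hD, not_case3⟩
end

section
/- For any Dyck words x and y, the bit-flip permutation satisfies π(xy) = (π(x), |x| + π(y)), i.e., π of the concatenation is the concatenation of π(x) with the entrywise shift of π(y) by |x|. -/
/-- `w` is a lattice path from height `h` down to height `0` that never goes below `0`
(a `true` is an up-step). Dyck words are the case `h = 0`. -/
def IsDyckDescent (h : ℕ) (w : List Bool) : Prop :=
  w.count false = w.count true + h ∧ ∀ n, (w.take n).count false ≤ (w.take n).count true + h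

theorem isDyck_iff_isDyckDescent_zero {w : List Bool} : isDyck w ↔ IsDyckDescent 0 w := by
  simp only [isDyck, IsDyckDescent, add_zero, eq_comm]

theorem isDyck_nil : isDyck [] := by
  simp [isDyck]

theorem isDyck.append {x y : List Bool} (hx : isDyck x) (hy : isDyck y) : isDyck (x ++ y) := by
  refine ⟨by simp only [List.count_append, hx.1, hy.1], fun n => ?_⟩
  simp only [List.take_append, List.count_append]
  exact Nat.add_le_add (hx.2 n) (hy.2 _)

theorem isDyck.wrap {u : List Bool} (hu : isDyck u) : isDyck (true :: u ++ [false]) := by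
  refine ⟨by simp [hu.1], fun n => ?_⟩
  rcases n with _ | m
  · simp
  · have hm := hu.2 m
    have hle : ([false].take (m - u.length)).count false ≤ 1 := by
      rcases m - u.length with _ | _ <;> simp
    simp only [List.cons_append, List.take_succ_cons, List.take_append, List.count_cons,
      List.count_append] at hm hle ⊢
    simp only [beq_false, Bool.not_true, Bool.false_eq_true, ↓reduceIte, add_zero, BEq.rfl]
    omega

theorem IsDyckDescent.of_cons_true {h : ℕ} {w : List Bool}
    (hw : IsDyckDescent h (true :: w)) : IsDyckDescent (h + 1) w := by
  obtain ⟨hcount, hprefix⟩ := hw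
  refine ⟨?_, fun n => ?_⟩
  · simp only [List.count_cons_self, ne_eq, Bool.true_eq_false, not_false_eq_true,
      List.count_cons_of_ne] at hcount
    omega
  · have := hprefix (n + 1)
    simp only [List.take_succ_cons, ne_eq, Bool.true_eq_false, not_false_eq_true,
      List.count_cons_of_ne, List.count_cons_self] at this
    omega

theorem IsDyckDescent.of_cons_false {h : ℕ} {w : List Bool}
    (hw : IsDyckDescent (h + 1) (false :: w)) : IsDyckDescent h w := by
  obtain ⟨hcount, hprefix⟩ := hw
  refine ⟨?_, fun n => ?_⟩
  · simp only [List.count_cons_self, ne_eq, Bool.false_eq_true, not_false_eq_true,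
      List.count_cons_of_ne] at hcount
    omega
  · have := hprefix (n + 1)
    simp only [List.take_succ_cons, List.count_cons_self, ne_eq, Bool.false_eq_true,
      not_false_eq_true, List.count_cons_of_ne] at this
    omega

/-- The first return to height `h` splits a descent from `h + 1`. -/
theorem IsDyckDescent.exists_split {h : ℕ} {w : List Bool} (hw : IsDyckDescent (h + 1) w) :
    ∃ u v, isDyck u ∧ IsDyckDescent h v ∧ w = u ++ false :: v := by
  induction hlen : w.length using Nat.strong_induction_on generalizing h w with
  | _ len ih =>
  rcases w with _ | ⟨_ | _, w⟩
  · simpa [IsDyckDescent] using hw.1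
  · exact ⟨[], w, isDyck_nil, hw.of_cons_false, rfl⟩
  · obtain ⟨u₁, v₁, hu₁, hv₁, rfl⟩ := ih w.length (by simp [← hlen]) hw.of_cons_true rfl
    have hv₁_lt : v₁.length < len := by
      simp only [← hlen, List.length_cons, List.length_append]; omega
    obtain ⟨u₂, v₂, hu₂, hv₂, rfl⟩ := ih v₁.length hv₁_lt hv₁ rfl
    exact ⟨true :: u₁ ++ [false] ++ u₂, v₂, hu₁.wrap.append hu₂, hv₂, by simp⟩

theorem isDyck.eq_nil_or_exists_split {x : List Bool} (hx : isDyck x) :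
    x = [] ∨ ∃ u v, isDyck u ∧ isDyck v ∧ x = true :: u ++ false :: v := by
  rcases x with _ | ⟨_ | _, w⟩
  · exact Or.inl rfl
  · simpa using hx.2 1
  · obtain ⟨u, v, hu, hv, rfl⟩ := (isDyck_iff_isDyckDescent_zero.1 hx).of_cons_true.exists_split
    exact Or.inr ⟨u, v, hu, isDyck_iff_isDyckDescent_zero.2 hv, by simp⟩

theorem stmt_9 (π : List Bool → List ℕ) (hπ : IsPiFun π) (x y : List Bool)
    (hx : isDyck x) (hy : isDyck y) :
    π (x ++ y) = π x ++ (π y).map (fun a => x.length + a) := by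
  induction hlen : x.length using Nat.strong_induction_on generalizing x with
  | _ len ih =>
  obtain rfl | ⟨u, v, hu, hv, rfl⟩ := hx.eq_nil_or_exists_split
  · simp [hπ.1, ← hlen]
  have hv_lt : v.length < len := by
    simp only [← hlen, List.cons_append, List.length_cons, List.length_append]; omega
  subst hlen
  have hxy : true :: u ++ false :: v ++ y = true :: u ++ false :: (v ++ y) := by simp
  rw [hxy, hπ.2 u _ hu (hv.append hy), hπ.2 u v hu hv, ih _ hv_lt v hv rfl]
  simp only [List.map_append, List.map_map, List.cons_append, List.append_assoc,
    List.length_cons, List.length_append, Function.comp_def]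
  congr 5
  funext a
  omega
end

section
/- For every k ≥ 1, the collection C_k = {C(x) : x a Dyck word of length 2k}, where C(x) is obtained from the path P(x) by adding the edge {x, x̄}, is a cycle factor of the graph G_k^+: the cycles are vertex-disjoint, each has length 2k+1, and together they cover all vertices of G_k^+. -/
/-!
Two facts about the flip sequence `π x` of a Dyck word `x` carry the proof.

First, `π x` lists every position of `x` once, and the bits of `x` read in this order are
`0, 1, 0, 1, …`. Flipping them one at a time therefore alternates between weights `k` and `k + 1`,
visits `2k + 1` distinct vertices and ends at `x̄`: `P(x)` is a path in `G_k`, closed up to a cycle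
by the edge `{x̄, x}`.

Second, for `x = 1u0v` the path `P(x)` consists of `x`, then the vertices `1 (mirror z) 1 v` for `z`
on `P(mirror u)`, then the vertices `0 ū 1 w` for `w` on `P(v)`. Splitting a bitstring at the first
prefix with more 0s than 1s is unique, so a vertex determines which of these pieces it lies in and
the corresponding `u`, `v`; by induction on the length, every vertex of `B_k` lies on exactly one
path `P(x)`.
-/

namespace MiddleLevels

variable {π : List Bool → List ℕ}

section Words

lemma count_true_add_count_false (l : List Bool) : l.count true + l.count false = l.length := by
  induction l with
  | nil => rfl
  | cons b t ih => cases b <;> simp <;> omega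

lemma count_take_add_count_drop (b : Bool) (l : List Bool) (n : ℕ) :
    (l.take n).count b + (l.drop n).count b = l.count b := by
  rw [← List.count_append, List.take_append_drop]

lemma count_take_append (b : Bool) (l₁ l₂ : List Bool) (n : ℕ) :
    ((l₁ ++ l₂).take n).count b
      = (l₁.take n).count b + (l₂.take (n - l₁.length)).count b := by
  rw [List.take_append, List.count_append]

lemma count_map_not (b : Bool) (l : List Bool) : (l.map (!·)).count b = l.count (!b) := by
  simpa using List.count_map_of_injective l (!·) (fun _ _ => Bool.not_inj) (!b)

lemma compl_eq_map (x : List Bool) : compl x = x.map (!·) := rfl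

@[simp] lemma length_compl (x : List Bool) : (compl x).length = x.length := List.length_map _

@[simp] lemma length_mirror (x : List Bool) : (mirror x).length = x.length := by
  simp [mirror]

@[simp] lemma count_compl (b : Bool) (x : List Bool) : (compl x).count b = x.count (!b) :=
  count_map_not b x

@[simp] lemma count_mirror (b : Bool) (x : List Bool) : (mirror x).count b = x.count (!b) := by
  rw [mirror, count_map_not, List.count_reverse]

@[simp] lemma compl_compl (x : List Bool) : compl (compl x) = x := by
  simp [compl_eq_map, Function.comp_def]

@[simp] lemma mirror_mirror (x : List Bool) : mirror (mirror x) = x := by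
  simp [mirror, ← List.map_reverse, Function.comp_def]

lemma mirror_compl (x : List Bool) : mirror (compl x) = x.reverse := by
  simp [mirror, compl_eq_map, ← List.map_reverse, Function.comp_def]

lemma reverse_mirror (x : List Bool) : (mirror x).reverse = compl x := by
  simp [mirror, compl_eq_map]

@[simp] lemma compl_append_cons (a c : List Bool) (b : Bool) :
    compl (a ++ b :: c) = compl a ++ (!b) :: compl c := by
  simp [compl_eq_map]

@[simp] lemma mirror_append_cons (a c : List Bool) (b : Bool) :
    mirror (a ++ b :: c) = mirror c ++ (!b) :: mirror a := by
  simp [mirror]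

lemma compl_injective : Function.Injective compl :=
  Function.LeftInverse.injective compl_compl

lemma mirror_injective : Function.Injective mirror :=
  Function.LeftInverse.injective mirror_mirror

lemma getD_mirror {x : List Bool} {j : ℕ} (hj : j < x.length) :
    (mirror x).getD j false = !(x.getD (x.length - 1 - j) false) := by
  rw [List.getD_eq_getElem _ _ (by simpa using hj), List.getD_eq_getElem _ _ (by omega)]
  simp [mirror]

end Words

section Dyck

lemma isDyck_nil : isDyck [] := ⟨rfl, fun n => by simp⟩

lemma two_mul_count_true_of_isDyck {x : List Bool} (hx : isDyck x) :
    2 * x.count true = x.length := by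
  have := count_true_add_count_false x
  have := hx.1
  omega

lemma isDyck_append {a b : List Bool} (ha : isDyck a) (hb : isDyck b) : isDyck (a ++ b) := by
  refine ⟨by simp [ha.1, hb.1], fun n => ?_⟩
  simp only [count_take_append]
  have := ha.2 n
  have := hb.2 (n - a.length)
  omega

lemma isDyck_of_isDyck_append {a b : List Bool} (hab : isDyck (a ++ b))
    (ha : a.count true = a.count false) : isDyck b := by
  refine ⟨by have := hab.1; simp only [List.count_append] at this; omega, fun n => ?_⟩
  have := hab.2 (a.length + n)
  simp only [List.take_length_add_append, List.count_append] at this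
  omega

lemma isDyck_cons_append_singleton {u : List Bool} (hu : isDyck u) :
    isDyck (true :: u ++ [false]) := by
  refine ⟨by simp [hu.1], fun n => ?_⟩
  cases n with
  | zero => simp
  | succ n =>
    have := hu.2 n
    have hf : ∀ m, (([false] : List Bool).take m).count true = 0 := by
      intro m; cases m <;> simp
    have ht : ∀ m, (([false] : List Bool).take m).count false ≤ 1 := by
      intro m; cases m <;> simp
    rw [List.cons_append, List.take_succ_cons, List.count_cons_self,
      List.count_cons_of_ne (by decide), count_take_append, count_take_append, hf]
    have := ht (n - u.length)
    omega

lemma isDyck_cons_append_cons {u v : List Bool} (hu : isDyck u) (hv : isDyck v) :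
    isDyck (true :: u ++ false :: v) := by
  simpa using isDyck_append (isDyck_cons_append_singleton hu) hv

lemma isDyck_mirror {u : List Bool} (hu : isDyck u) : isDyck (mirror u) := by
  refine ⟨by simp [hu.1], fun n => ?_⟩
  have htake : (mirror u).take n = mirror (u.drop (u.length - n)) := by
    simp only [mirror, ← List.map_take, List.take_reverse]
  rw [htake, count_mirror, count_mirror]
  have := count_take_add_count_drop true u (u.length - n)
  have := count_take_add_count_drop false u (u.length - n)
  have := hu.2 (u.length - n)
  have := hu.1
  simp only [Bool.not_true, Bool.not_false]
  omega

lemma not_isDyck_append_true_cons {w v : List Bool} (hv : isDyck v) :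
    ¬ isDyck (w ++ true :: v) := by
  intro h
  have hbal := h.1
  have hpre := h.2 w.length
  simp only [List.take_left', List.count_append, List.count_cons] at hbal hpre
  have := hv.1
  simp at hbal
  omega

lemma exists_eq_isDyck_append_false_cons {z : List Bool}
    (h : ∃ j, (z.take j).count true < (z.take j).count false) :
    ∃ d w, isDyck d ∧ z = d ++ false :: w := by
  obtain ⟨hj, hmin⟩ := (Nat.find_eq_iff h).1 rfl
  obtain ⟨i, hi⟩ := Nat.exists_eq_succ_of_ne_zero (show Nat.find h ≠ 0 by
    rintro h0; simp [h0] at hj)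
  rw [hi] at hj hmin
  have hmin' : ∀ n ≤ i, (z.take n).count false ≤ (z.take n).count true :=
    fun n hn => not_lt.mp (hmin n (by omega))
  have hiz : i < z.length := by
    by_contra! hle
    have := hmin' i le_rfl
    rw [List.take_of_length_le hle] at this
    rw [List.take_of_length_le (by omega)] at hj
    omega
  rw [← List.take_concat_get' z i hiz] at hj
  have hprev := hmin' i le_rfl
  have hbit : z[i] = false := by
    cases hb : z[i]
    · rfl
    · simp [hb, List.count_append] at hj
      omega
  refine ⟨z.take i, z.drop (i + 1), ⟨?_, fun n => ?_⟩, ?_⟩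
  · simp [hbit, List.count_append] at hj
    omega
  · rw [List.take_take]
    exact hmin' _ (by omega)
  · rw [← hbit, ← List.drop_eq_getElem_cons hiz, List.take_append_drop]

lemma append_false_cons_inj_of_isDyck {d d' w w' : List Bool} (hd : isDyck d) (hd' : isDyck d')
    (h : d ++ false :: w = d' ++ false :: w') : d = d' ∧ w = w' := by
  wlog hle : d.length ≤ d'.length generalizing d d' w w'
  · exact (this hd' hd h.symm (by omega)).imp Eq.symm Eq.symm
  obtain hlt | heq := hle.lt_or_eq
  · -- `d ++ [false]` would be a prefix of the Dyck word `d'` with more 0s than 1s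
    have hpre := hd'.2 (d.length + 1)
    have htake := congrArg (List.take (d.length + 1)) h
    rw [List.take_length_add_append, List.take_append_of_le_length (by omega)] at htake
    rw [← htake] at hpre
    have := hd.1
    simp at hpre
    omega
  · obtain ⟨rfl, hw⟩ := List.append_inj h heq
    exact ⟨rfl, List.cons_injective hw⟩

lemma exists_eq_cons_append_cons {x : List Bool} (hx : isDyck x) (hne : x ≠ []) :
    ∃ u v, isDyck u ∧ isDyck v ∧ x = true :: u ++ false :: v := by
  rcases x with _ | ⟨_ | _, z⟩
  · exact absurd rfl hne
  · simpa using hx.2 1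
  obtain ⟨u, v, hu, rfl⟩ := exists_eq_isDyck_append_false_cons (z := z) ⟨z.length, by
    have := hx.1
    simp only [List.take_length]
    simp at this
    omega⟩
  refine ⟨u, v, hu, isDyck_of_isDyck_append (a := true :: u ++ [false]) (by simpa using hx)
    (by simp [hu.1]), rfl⟩

end Dyck

section Flips

@[simp] lemma length_flipBit (y : List Bool) (a : ℕ) : (flipBit y a).length = y.length := by
  simp [flipBit]

lemma getD_flipBit {y : List Bool} {j : ℕ} (a : ℕ) (hj : j < y.length) :
    (flipBit y a).getD j false = (y.getD j false ^^ decide (j = a - 1)) := by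
  rw [List.getD_eq_getElem _ _ (by simpa using hj), List.getD_eq_getElem _ _ hj]
  by_cases h : j = a - 1
  · subst h; simp [flipBit, hj]
  · simp [flipBit, Ne.symm h, h]

@[simp] lemma length_foldl_flipBit (l : List ℕ) (y : List Bool) :
    (l.foldl flipBit y).length = y.length := by
  induction l generalizing y <;> simp_all

lemma getD_foldl_flipBit {l : List ℕ} (hl : l.Nodup) (hpos : ∀ a ∈ l, 1 ≤ a) {y : List Bool}
    {j : ℕ} (hj : j < y.length) :
    (l.foldl flipBit y).getD j false = (y.getD j false ^^ decide (j + 1 ∈ l)) := by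
  induction l generalizing y with
  | nil => simp
  | cons a t ih =>
    obtain ⟨hat, ht⟩ := List.nodup_cons.1 hl
    have ha := hpos a List.mem_cons_self
    rw [List.foldl_cons, ih ht (fun b hb => hpos b (List.mem_cons_of_mem a hb)) (by simpa),
      getD_flipBit a hj]
    by_cases hja : j + 1 = a
    · subst hja; simp [hat]
    · have : ¬ j = a - 1 := by omega
      simp [this, hja]

lemma count_true_flipBit {y : List Bool} {a : ℕ} (ha : a - 1 < y.length) :
    (flipBit y a).count true + (y.getD (a - 1) false).toNat
      = y.count true + (!y.getD (a - 1) false).toNat := by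
  rw [flipBit, List.count_set ha, List.getD_eq_getElem _ _ ha]
  cases hb : y[a - 1]
  · simp
  · have : 0 < y.count true := List.count_pos_iff.2 (hb ▸ List.getElem_mem ha)
    simp
    omega

lemma gkAdj_flipBit {k : ℕ} {y : List Bool} {a : ℕ} (hy : inB k y) (hy' : inB k (flipBit y a))
    (ha : a - 1 < 2 * k) : GkAdj k y (flipBit y a) := by
  refine ⟨hy, hy', ?_⟩
  rw [← hy.1] at ha ⊢
  calc (List.range y.length).countP (fun i => y.getD i false != (flipBit y a).getD i false)
      = (List.range y.length).count (a - 1) := by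
        rw [List.count_eq_countP]
        refine List.countP_congr fun i hi => ?_
        rw [getD_flipBit a (List.mem_range.1 hi)]
        simp
    _ = 1 := by simp [List.count_range, ha]

lemma flipBit_cons_one (b : Bool) (l : List Bool) : flipBit (b :: l) 1 = (!b) :: l := by
  simp [flipBit]

lemma flipBit_cons {a : ℕ} (b : Bool) (l : List Bool) (ha : 2 ≤ a) :
    flipBit (b :: l) a = b :: flipBit l (a - 1) := by
  obtain ⟨a, rfl⟩ : ∃ c, a = c + 2 := ⟨a - 2, by omega⟩
  simp [flipBit]

lemma flipBit_append_left {s : List Bool} (t : List Bool) {a : ℕ} (ha : a - 1 < s.length) :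
    flipBit (s ++ t) a = flipBit s a ++ t := by
  simp [flipBit, ha, List.getD_eq_getElem?_getD, List.getElem?_append_left ha]

lemma flipBit_append_right (s : List Bool) {t : List Bool} {a : ℕ} (ha : s.length < a) :
    flipBit (s ++ t) a = s ++ flipBit t (a - s.length) := by
  have : ¬ a - 1 < s.length := by omega
  simp [flipBit, List.set_append, this, List.getD_eq_getElem?_getD,
    List.getElem?_append_right (show s.length ≤ a - 1 by omega), Nat.sub_right_comm a 1]

lemma ext_getD {y z : List Bool} (hlen : y.length = z.length)
    (h : ∀ j < y.length, y.getD j false = z.getD j false) : y = z :=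
  List.ext_getElem hlen fun j hj hj' => by
    have := h j hj
    rwa [List.getD_eq_getElem _ _ hj, List.getD_eq_getElem _ _ hj'] at this

lemma flipBit_mirror {z : List Bool} {a : ℕ} (ha : 1 ≤ a) (ha' : a ≤ z.length) :
    flipBit (mirror z) (z.length + 1 - a) = mirror (flipBit z a) := by
  refine ext_getD (by simp) fun j hj => ?_
  simp only [length_flipBit, length_mirror] at hj
  rw [getD_flipBit _ (by simpa using hj), getD_mirror hj, getD_mirror (by simpa using hj),
    length_flipBit, getD_flipBit _ (by omega)]
  have : (j = z.length + 1 - a - 1) ↔ (z.length - 1 - j = a - 1) := by omega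
  simp [this]

end Flips

/-- `l` lists every (1-indexed) position of `x` exactly once, and the bits of `x` read in the
order `l` are `0, 1, 0, 1, …`. -/
structure IsAlternatingFlipSeq (x : List Bool) (l : List ℕ) : Prop where
  nodup : l.Nodup
  mem_bounds : ∀ a ∈ l, 1 ≤ a ∧ a ≤ x.length
  length_eq : l.length = x.length
  map_getD : l.map (fun a => x.getD (a - 1) false) = (List.range l.length).map Nat.bodd

lemma getElem_notMem_take_of_nodup {l : List ℕ} (hl : l.Nodup) {i : ℕ} (hi : i < l.length) :
    l[i] ∉ l.take i := by
  intro hmem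
  obtain ⟨m, hm, hml⟩ := List.mem_take_iff_getElem.1 hmem
  have := hl.getElem_inj_iff.1 hml
  omega

lemma map_bodd_range_add {m : ℕ} (hm : m % 2 = 0) (n : ℕ) :
    (List.range (1 + m + (1 + n))).map Nat.bodd
      = false :: ((List.range m).map (fun i => !i.bodd)
        ++ true :: (List.range n).map Nat.bodd) := by
  have hbm : m.bodd = false := by simpa [Nat.mod_two_of_bodd] using hm
  simp [List.range_add, Nat.bodd_add, hbm, Function.comp_def]

/-- The right-hand side of the recursion `π (1u0v) = piCons |u| (π (mirror u)) (π v)`. -/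
def piCons (m : ℕ) (A B : List ℕ) : List ℕ :=
  (m + 2) :: (A.map (fun a => m + 2 - a)) ++ 1 :: (B.map (fun a => m + 2 + a))

lemma nodup_piCons {m : ℕ} {A B : List ℕ} (hA : A.Nodup) (hB : B.Nodup)
    (hAb : ∀ a ∈ A, 1 ≤ a ∧ a ≤ m) (hBb : ∀ b ∈ B, 1 ≤ b) :
    (piCons m A B).Nodup := by
  rw [piCons, List.nodup_append, List.nodup_cons, List.nodup_cons]
  refine ⟨⟨?_, hA.map_on fun a ha b hb hab => ?_⟩,
    ⟨?_, hB.map_on fun a _ b _ hab => ?_⟩, ?_⟩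
  · simp only [List.mem_map, not_exists, not_and]
    intro a ha
    have := hAb a ha
    omega
  · have := hAb a ha
    have := hAb b hb
    omega
  · simp only [List.mem_map, not_exists, not_and]
    intro b _
    omega
  · omega
  · simp only [List.mem_cons, List.mem_map]
    rintro _ (rfl | ⟨a, ha, rfl⟩) _ (rfl | ⟨b, hb, rfl⟩)
    · omega
    · have := hBb b hb
      omega
    · have := hAb a ha
      omega
    · have := hAb a ha
      omega

lemma getD_cons_append_cons_mid (u v : List Bool) :
    (true :: u ++ false :: v).getD (u.length + 2 - 1) false = false := by
  simp

lemma getD_cons_append_cons_left {u : List Bool} (v : List Bool) {a : ℕ} (ha : 1 ≤ a)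
    (ha' : a ≤ u.length) :
    (true :: u ++ false :: v).getD (u.length + 2 - a - 1) false
      = !(mirror u).getD (a - 1) false := by
  rw [getD_mirror (by omega), show u.length + 2 - a - 1 = (u.length - a) + 1 by omega,
    show u.length - 1 - (a - 1) = u.length - a by omega]
  simp [List.getD_eq_getElem?_getD,
    List.getElem?_append_left (show u.length - a < u.length by omega)]

lemma getD_cons_append_cons_right (u v : List Bool) {b : ℕ} (hb : 1 ≤ b) :
    (true :: u ++ false :: v).getD (u.length + 2 + b - 1) false = v.getD (b - 1) false := by
  rw [show u.length + 2 + b - 1 = (u.length + ((b - 1) + 1)) + 1 by omega]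
  simp only [List.getD_eq_getElem?_getD, List.cons_append, List.getElem?_cons_succ,
    List.getElem?_append_right (Nat.le_add_right _ _), Nat.add_sub_cancel_left]

namespace IsAlternatingFlipSeq

variable {x : List Bool} {l : List ℕ}

lemma getD_getElem (h : IsAlternatingFlipSeq x l) {i : ℕ} (hi : i < l.length) :
    x.getD (l[i] - 1) false = i.bodd := by
  simpa using List.getElem_of_eq h.map_getD (i := i) (by simpa)

lemma getD_scanl (h : IsAlternatingFlipSeq x l) {i j : ℕ} (hi : i ≤ l.length)
    (hj : j < x.length) :
    ((l.scanl flipBit x)[i]'(by simp; omega)).getD j false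
      = (x.getD j false ^^ decide (j + 1 ∈ l.take i)) := by
  rw [List.getElem_scanl]
  exact getD_foldl_flipBit ((List.take_sublist _ _).nodup h.nodup)
    (fun a ha => (h.mem_bounds a (List.mem_of_mem_take ha)).1) hj

lemma foldl_eq_compl (h : IsAlternatingFlipSeq x l) : l.foldl flipBit x = compl x := by
  have hmem : ∀ a, 1 ≤ a → a ≤ x.length → a ∈ l := by
    have hsub : l.toFinset ⊆ Finset.Icc 1 x.length := fun a ha => by
      simpa using h.mem_bounds a (List.mem_toFinset.1 ha)
    have heq := Finset.eq_of_subset_of_card_le hsub (by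
      simp [List.toFinset_card_of_nodup h.nodup, h.length_eq])
    intro a ha1 ha2
    simpa [← List.mem_toFinset, heq] using And.intro ha1 ha2
  refine List.ext_getElem (by simp) fun j hj _ => ?_
  have := getD_foldl_flipBit h.nodup (fun a ha => (h.mem_bounds a ha).1) (by simpa using hj)
  rw [List.getD_eq_getElem _ _ hj, List.getD_eq_getElem _ _ (by simpa using hj),
    decide_eq_true (hmem (j + 1) (by omega) (by simpa using hj))] at this
  simpa [compl_eq_map] using this

lemma nodup_scanl (h : IsAlternatingFlipSeq x l) : (l.scanl flipBit x).Nodup := by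
  rw [List.nodup_iff_getElem?_ne_getElem?]
  intro i j hij hj heq
  simp only [List.length_scanl] at hj
  have hi' : i < l.length := by omega
  have hpos := h.mem_bounds _ (List.getElem_mem hi')
  -- the bit at position `l[i]` is flipped in the `j`-th vertex but not yet in the `i`-th one
  have hnot := getElem_notMem_take_of_nodup h.nodup hi'
  have hin : l[i] ∈ l.take j := List.mem_take_iff_getElem.2 ⟨i, by omega, rfl⟩
  rw [List.getElem?_eq_getElem (by simp; omega), List.getElem?_eq_getElem (by simp; omega),
    Option.some_inj] at heq
  have hbits := congrArg (List.getD · (l[i] - 1) false) heq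
  rw [h.getD_scanl (by omega) (by omega), h.getD_scanl (by omega) (by omega),
    Nat.sub_add_cancel hpos.1] at hbits
  simp [hnot, hin] at hbits

lemma getD_scanl_getElem (h : IsAlternatingFlipSeq x l) {i : ℕ} (hi : i < l.length) :
    ((l.scanl flipBit x)[i]'(by simp; omega)).getD (l[i] - 1) false = i.bodd := by
  have hpos := h.mem_bounds _ (List.getElem_mem hi)
  rw [h.getD_scanl hi.le (by omega), Nat.sub_add_cancel hpos.1,
    decide_eq_false (getElem_notMem_take_of_nodup h.nodup hi), Bool.xor_false, h.getD_getElem hi]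

lemma two_mul_count_true_getElem_scanl (h : IsAlternatingFlipSeq x l)
    (hx : 2 * x.count true = x.length) {i : ℕ} (hi : i < (l.scanl flipBit x).length) :
    2 * ((l.scanl flipBit x)[i]).count true = x.length + 2 * (i % 2) := by
  induction i with
  | zero => simpa using hx
  | succ i ih =>
    simp only [List.length_scanl] at hi
    have hpos := h.mem_bounds _ (List.getElem_mem (show i < l.length by omega))
    have hstep := count_true_flipBit (y := (l.scanl flipBit x)[i]) (a := l[i])
      (by simp [List.getElem_scanl]; omega)
    rw [h.getD_scanl_getElem (by omega)] at hstep
    have := ih (by simp; omega)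
    rw [List.getElem_succ_scanl, Nat.mod_two_of_bodd, Nat.bodd_succ]
    rw [Nat.mod_two_of_bodd] at this
    cases hb : i.bodd <;> simp only [hb, Bool.not_true, Bool.not_false, Bool.toNat_true,
      Bool.toNat_false] at hstep this ⊢ <;> omega

lemma inB_getElem_scanl (h : IsAlternatingFlipSeq x l) {k : ℕ} (hlen : x.length = 2 * k)
    (hx : x.count true = k) {i : ℕ} (hi : i < (l.scanl flipBit x).length) :
    inB k (l.scanl flipBit x)[i] := by
  have := h.two_mul_count_true_getElem_scanl (by omega) hi
  refine ⟨by simp [hlen], ?_⟩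
  have := Nat.mod_two_eq_zero_or_one i
  omega

lemma isChain_gkAdj_scanl (h : IsAlternatingFlipSeq x l) {k : ℕ} (hlen : x.length = 2 * k)
    (hx : x.count true = k) : (l.scanl flipBit x).IsChain (GkAdj k) := by
  rw [List.isChain_iff_getElem]
  intro i hi
  have hv := h.inB_getElem_scanl hlen hx hi
  rw [List.getElem_succ_scanl] at hv ⊢
  have := h.mem_bounds _ (List.getElem_mem (show i < l.length by simp at hi; omega))
  exact gkAdj_flipBit (h.inB_getElem_scanl hlen hx (by omega)) hv (by omega)

lemma cons_append_cons {u v : List Bool} {A B : List ℕ} (hu : u.length % 2 = 0)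
    (hA : IsAlternatingFlipSeq (mirror u) A) (hB : IsAlternatingFlipSeq v B) :
    IsAlternatingFlipSeq (true :: u ++ false :: v) (piCons u.length A B) := by
  have hAb := hA.mem_bounds
  simp only [length_mirror] at hAb
  refine ⟨nodup_piCons hA.nodup hB.nodup hAb fun b hb => (hB.mem_bounds b hb).1, ?_,
    by simp [piCons, hA.length_eq, hB.length_eq], ?_⟩
  · simp only [piCons, List.mem_append, List.mem_cons, List.mem_map]
    rintro _ ((rfl | ⟨a, ha, rfl⟩) | (rfl | ⟨b, hb, rfl⟩))
    · simp
    · have := hAb a ha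
      simp
      omega
    · simp
    · have := hB.mem_bounds b hb
      simp
      omega
  · have hA' := congrArg (List.map (!·)) hA.map_getD
    simp only [List.map_map, Function.comp_def, hA.length_eq, length_mirror] at hA'
    have hlen : (piCons u.length A B).length = 1 + u.length + (1 + B.length) := by
      simp [piCons, hA.length_eq]
      omega
    rw [hlen, map_bodd_range_add hu, ← hB.map_getD, ← hA']
    simp only [piCons, List.map_cons, List.map_append, List.map_map, Function.comp_def,
      getD_cons_append_cons_mid,
      List.map_congr_left fun a ha => getD_cons_append_cons_left v (hAb a ha).1 (hAb a ha).2,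
      List.map_congr_left fun b hb => getD_cons_append_cons_right u v (hB.mem_bounds b hb).1]
    rfl

end IsAlternatingFlipSeq

theorem isAlternatingFlipSeq_pi (hπ : IsPiFun π) {x : List Bool} (hx : isDyck x) :
    IsAlternatingFlipSeq x (π x) := by
  induction h : x.length using Nat.strong_induction_on generalizing x with
  | _ n ih =>
  rcases eq_or_ne x [] with rfl | hne
  · rw [hπ.1]
    exact ⟨List.nodup_nil, by simp, rfl, rfl⟩
  obtain ⟨u, v, hu, hv, rfl⟩ := exists_eq_cons_append_cons hx hne
  simp only [List.cons_append, List.length_cons, List.length_append] at h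
  rw [hπ.2 u v hu hv]
  have := two_mul_count_true_of_isDyck hu
  exact .cons_append_cons (by omega) (ih _ (by omega) (isDyck_mirror hu) (length_mirror u))
    (ih _ (by omega) hv rfl)

section PathRecursion

lemma flipBit_cons_append_cons_mid (u v : List Bool) :
    flipBit (true :: u ++ false :: v) (u.length + 2) = true :: u ++ true :: v := by
  rw [List.cons_append, flipBit_cons _ _ (by omega), flipBit_append_right _ (by omega),
    show u.length + 2 - 1 - u.length = 1 by omega, flipBit_cons_one]
  rfl

lemma flipBit_cons_mirror_append {z : List Bool} (v : List Bool) {a : ℕ} (ha : 1 ≤ a)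
    (ha' : a ≤ z.length) :
    flipBit (true :: mirror z ++ true :: v) (z.length + 2 - a)
      = true :: mirror (flipBit z a) ++ true :: v := by
  rw [List.cons_append, flipBit_cons _ _ (by omega), flipBit_append_left _ (by simp; omega),
    show z.length + 2 - a - 1 = z.length + 1 - a by omega, flipBit_mirror ha ha']
  rfl

lemma flipBit_cons_compl_append (u : List Bool) {w : List Bool} {a : ℕ} (ha : 1 ≤ a) :
    flipBit (false :: compl u ++ true :: w) (u.length + 2 + a)
      = false :: compl u ++ true :: flipBit w a := by
  rw [List.cons_append, flipBit_cons _ _ (by omega), flipBit_append_right _ (by simp; omega),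
    length_compl, show u.length + 2 + a - 1 - u.length = a + 1 by omega,
    flipBit_cons _ _ (by omega), Nat.add_sub_cancel]
  rfl

lemma scanl_flipBit_map (e : List Bool → List Bool) (g : ℕ → ℕ) {l : List ℕ}
    {z : List Bool}
    (he : ∀ y, y.length = z.length → ∀ a ∈ l, flipBit (e y) (g a) = e (flipBit y a)) :
    (l.map g).scanl flipBit (e z) = (l.scanl flipBit z).map e := by
  induction l generalizing z with
  | nil => simp
  | cons a t ih =>
    rw [List.map_cons, List.scanl_cons, List.scanl_cons, he z rfl a List.mem_cons_self,
      List.map_cons, ih fun y hy b hb => he y (by simpa using hy) b (List.mem_cons_of_mem a hb)]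

theorem pathOf_cons_append_cons (hπ : IsPiFun π) {u v : List Bool} (hu : isDyck u)
    (hv : isDyck v) :
    pathOf π (true :: u ++ false :: v) = (true :: u ++ false :: v) ::
      ((pathOf π (mirror u)).map (fun z => true :: mirror z ++ true :: v)
        ++ (pathOf π v).map (fun w => false :: compl u ++ true :: w)) := by
  have hA := isAlternatingFlipSeq_pi hπ (isDyck_mirror hu)
  have hB := isAlternatingFlipSeq_pi hπ hv
  have hfirst : ((π (mirror u)).map (u.length + 2 - ·)).scanl flipBit (true :: u ++ true :: v)
      = (pathOf π (mirror u)).map (fun z => true :: mirror z ++ true :: v) := by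
    simpa [pathOf] using scanl_flipBit_map (fun z => true :: mirror z ++ true :: v)
      (u.length + 2 - ·) (z := mirror u) fun y hy a ha => by
        have := hA.mem_bounds a ha
        simp only [length_mirror] at hy this
        rw [← hy]
        exact flipBit_cons_mirror_append v this.1 (by omega)
  have hsecond : ((π v).map (u.length + 2 + ·)).scanl flipBit (false :: compl u ++ true :: v)
      = (pathOf π v).map (fun w => false :: compl u ++ true :: w) :=
    scanl_flipBit_map (fun w => false :: compl u ++ true :: w) (u.length + 2 + ·)
      fun _ _ a ha => flipBit_cons_compl_append u (hB.mem_bounds a ha).1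
  have hturn : ((π (mirror u)).map (u.length + 2 - ·)).foldl flipBit (true :: u ++ true :: v)
      = true :: compl u ++ true :: v := by
    rw [← List.getLast_scanl List.scanl_ne_nil]
    simp only [hfirst, List.getLast_map, pathOf, List.getLast_scanl, hA.foldl_eq_compl,
      mirror_compl, reverse_mirror]
  rw [pathOf, hπ.2 u v hu hv, List.cons_append (a := u.length + 2), List.scanl_cons,
    flipBit_cons_append_cons_mid, List.scanl_append, hfirst, hturn, List.scanl_cons, List.tail_cons,
    show flipBit (true :: compl u ++ true :: v) 1 = false :: compl u ++ true :: v
      from flipBit_cons_one _ _, hsecond]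

lemma self_mem_pathOf (x : List Bool) : x ∈ pathOf π x := by
  rw [pathOf]
  cases π x <;> simp

lemma length_of_mem_pathOf {x y : List Bool} (hy : y ∈ pathOf π x) : y.length = x.length := by
  obtain ⟨i, hi, rfl⟩ := List.mem_iff_getElem.1 hy
  simp [pathOf]

lemma pathOf_nil (hπ : IsPiFun π) : pathOf π [] = [[]] := by
  rw [pathOf, hπ.1, List.scanl_nil]

lemma mem_pathOf_cons_append_cons (hπ : IsPiFun π) {u v y : List Bool} (hu : isDyck u)
    (hv : isDyck v) :
    y ∈ pathOf π (true :: u ++ false :: v) ↔ y = true :: u ++ false :: v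
      ∨ (∃ z ∈ pathOf π (mirror u), y = true :: mirror z ++ true :: v)
      ∨ (∃ w ∈ pathOf π v, y = false :: compl u ++ true :: w) := by
  rw [pathOf_cons_append_cons hπ hu hv]
  simp only [List.mem_cons, List.mem_append, List.mem_map]
  simp only [eq_comm (b := y)]

end PathRecursion

section Cover

lemma compl_append_true_cons_inj_of_isDyck {d d' w w' : List Bool} (hd : isDyck d) (hd' : isDyck d')
    (h : compl d ++ true :: w = compl d' ++ true :: w') : d = d' ∧ w = w' := by
  have h' := congrArg compl h
  simp only [compl_append_cons, compl_compl, Bool.not_true] at h'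
  obtain ⟨rfl, hw⟩ := append_false_cons_inj_of_isDyck hd hd' h'
  exact ⟨rfl, compl_injective hw⟩

lemma append_true_cons_inj_of_isDyck {s s' v v' : List Bool} (hv : isDyck v) (hv' : isDyck v')
    (h : s ++ true :: v = s' ++ true :: v') : s = s' ∧ v = v' := by
  have h' := congrArg mirror h
  simp only [mirror_append_cons, Bool.not_true] at h'
  obtain ⟨hm, hs⟩ := append_false_cons_inj_of_isDyck (isDyck_mirror hv) (isDyck_mirror hv') h'
  exact ⟨mirror_injective hs, mirror_injective hm⟩

theorem eq_of_mem_pathOf_of_mem_pathOf (hπ : IsPiFun π) {x x' y : List Bool} (hx : isDyck x)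
    (hx' : isDyck x') (hy : y ∈ pathOf π x) (hy' : y ∈ pathOf π x') : x = x' := by
  induction h : x.length using Nat.strong_induction_on generalizing x x' y with
  | _ n ih =>
  have hlen := (length_of_mem_pathOf hy).symm.trans (length_of_mem_pathOf hy')
  rcases eq_or_ne x [] with rfl | hne
  · exact (List.length_eq_zero_iff.1 hlen.symm).symm
  have hne' : x' ≠ [] := by rintro rfl; exact hne (List.length_eq_zero_iff.1 hlen)
  obtain ⟨u, v, hu, hv, rfl⟩ := exists_eq_cons_append_cons hx hne
  obtain ⟨u', v', hu', hv', rfl⟩ := exists_eq_cons_append_cons hx' hne'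
  simp only [List.cons_append, List.length_cons, List.length_append] at h
  rw [mem_pathOf_cons_append_cons hπ hu hv] at hy
  rw [mem_pathOf_cons_append_cons hπ hu' hv'] at hy'
  rcases hy with rfl | ⟨z, hz, rfl⟩ | ⟨w, hw, rfl⟩ <;>
    rcases hy' with h' | ⟨z', hz', h'⟩ | ⟨w', hw', h'⟩
  · exact h'
  · rw [h'] at hx
    exact absurd hx (not_isDyck_append_true_cons hv')
  · simp at h'
  · rw [← h'] at hx'
    exact absurd hx' (not_isDyck_append_true_cons hv)
  · obtain ⟨hzz, rfl⟩ := append_true_cons_inj_of_isDyck hv hv' (List.cons_injective h')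
    rw [mirror_injective hzz] at hz
    rw [mirror_injective (ih u.length (by omega) (isDyck_mirror hu) (isDyck_mirror hu') hz hz'
      (length_mirror u))]
  · simp at h'
  · simp at h'
  · simp at h'
  · obtain ⟨rfl, rfl⟩ := compl_append_true_cons_inj_of_isDyck hu hu' (List.cons_injective h')
    rw [ih v.length (by omega) hv hv' hw hw' rfl]

/-- `y ∈ B_k` for `2k = y.length`, stated without `k`. -/
def InMiddleLevels (y : List Bool) : Prop :=
  2 * y.count true = y.length ∨ 2 * y.count true = y.length + 2

lemma exists_eq_compl_append_true_cons {z : List Bool} (hz : InMiddleLevels (false :: z)) :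
    ∃ d w, isDyck d ∧ InMiddleLevels w ∧ z = compl d ++ true :: w := by
  have hzc := count_true_add_count_false z
  obtain ⟨d, r, hd, hdr⟩ := exists_eq_isDyck_append_false_cons (z := compl z) ⟨z.length, by
    rw [List.take_of_length_le (by simp), count_compl, count_compl, Bool.not_true, Bool.not_false]
    simp [InMiddleLevels] at hz
    omega⟩
  refine ⟨d, compl r, hd, ?_, by rw [← compl_compl z, hdr, compl_append_cons]; rfl⟩
  have hc := congrArg (List.count false) hdr
  have hl := congrArg List.length hdr
  have := two_mul_count_true_of_isDyck hd
  have := count_true_add_count_false d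
  have := count_true_add_count_false r
  simp [InMiddleLevels] at hz hc hl ⊢
  omega

lemma exists_eq_mirror_append_true_cons {z : List Bool} (hz : InMiddleLevels (true :: z))
    (hnd : ¬ isDyck (true :: z)) :
    ∃ t v, isDyck v ∧ InMiddleLevels t ∧ true :: z = true :: mirror t ++ true :: v := by
  have hzc := count_true_add_count_false z
  simp only [InMiddleLevels, List.count_cons_self, List.length_cons] at hz
  obtain ⟨d, r, hd, hdr⟩ := exists_eq_isDyck_append_false_cons (z := mirror (true :: z)) (by
    rcases hz with hbal | hup
    · by_contra! hall
      exact hnd (by simpa using isDyck_mirror (u := mirror (true :: z)) ⟨by simp; omega, hall⟩)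
    · refine ⟨z.length + 1, ?_⟩
      rw [List.take_of_length_le (by simp)]
      simp
      omega)
  have hy : true :: z = mirror r ++ true :: mirror d := by
    rw [← mirror_mirror (true :: z), hdr, mirror_append_cons]
    rfl
  have hdc := two_mul_count_true_of_isDyck hd
  have hdc' := count_true_add_count_false d
  rcases hr : mirror r with _ | ⟨b, w⟩
  · rw [hr, List.nil_append, List.cons_inj_right] at hy
    have := congrArg (List.count true) hy
    have := congrArg List.length hy
    simp at *
    omega
  · rw [hr, List.cons_append, List.cons_eq_cons] at hy
    obtain ⟨rfl, hzw⟩ := hy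
    subst hzw
    refine ⟨mirror w, mirror d, isDyck_mirror hd, ?_, by rw [mirror_mirror]; rfl⟩
    have := count_true_add_count_false w
    simp [InMiddleLevels] at hz ⊢
    omega

lemma inMiddleLevels_of_inB {k : ℕ} {y : List Bool} (hy : inB k y) : InMiddleLevels y := by
  have := hy.1
  have := hy.2
  unfold InMiddleLevels
  omega

theorem exists_isDyck_mem_pathOf (hπ : IsPiFun π) {y : List Bool} (hy : InMiddleLevels y) :
    ∃ x, isDyck x ∧ y ∈ pathOf π x := by
  induction h : y.length using Nat.strong_induction_on generalizing y with
  | _ n ih =>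
  rcases y with _ | ⟨_ | _, z⟩
  · exact ⟨[], isDyck_nil, by simp [pathOf_nil hπ]⟩
  · obtain ⟨d, w, hd, hw, rfl⟩ := exists_eq_compl_append_true_cons hy
    obtain ⟨x, hx, hwx⟩ := ih w.length (by simp at h; omega) hw rfl
    exact ⟨true :: d ++ false :: x, isDyck_cons_append_cons hd hx,
      (mem_pathOf_cons_append_cons hπ hd hx).2 (Or.inr (Or.inr ⟨w, hwx, rfl⟩))⟩
  · by_cases hyd : isDyck (true :: z)
    · exact ⟨_, hyd, self_mem_pathOf _⟩
    obtain ⟨t, v, hv, ht, hz⟩ := exists_eq_mirror_append_true_cons hy hyd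
    obtain ⟨x, hx, htx⟩ := ih t.length (by
      have := congrArg List.length hz
      simp at this h
      omega) ht rfl
    refine ⟨true :: mirror x ++ false :: v, isDyck_cons_append_cons (isDyck_mirror hx) hv,
      (mem_pathOf_cons_append_cons hπ (isDyck_mirror hx) hv).2 (Or.inr (Or.inl ⟨t, ?_, hz⟩))⟩
    rwa [mirror_mirror]

end Cover

end MiddleLevels

open MiddleLevels in
theorem stmt_10_general (π : List Bool → List ℕ) (hπ : IsPiFun π) (k : ℕ) :
    (∀ x : List Bool, isDyck x → x.length = 2*k →
      (pathOf π x).length = 2*k + 1 ∧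
      (pathOf π x).Nodup ∧
      List.Chain' (GkPlusAdj k) (pathOf π x) ∧
      (∀ h : pathOf π x ≠ [],
        GkPlusAdj k ((pathOf π x).getLast h) ((pathOf π x).head h)))
    ∧ (∀ x x' : List Bool, isDyck x → x.length = 2*k → isDyck x' → x'.length = 2*k →
        x ≠ x' → ∀ y ∈ pathOf π x, y ∉ pathOf π x')
    ∧ (∀ y : List Bool, inB k y → ∃ x : List Bool,
        isDyck x ∧ x.length = 2*k ∧ y ∈ pathOf π x) := by
  refine ⟨fun x hx hlen => ?_, fun x x' hx _ hx' _ hne y hy hy' =>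
    hne (eq_of_mem_pathOf_of_mem_pathOf hπ hx hx' hy hy'), fun y hy => ?_⟩
  · have hA := isAlternatingFlipSeq_pi hπ hx
    have hk : x.count true = k := by have := two_mul_count_true_of_isDyck hx; omega
    have hxB : inB k x := ⟨hlen, Or.inl hk⟩
    have hxB' : inB k (compl x) := ⟨by simp [hlen], Or.inl (by simp [← hx.1, hk])⟩
    refine ⟨by simp [pathOf, hA.length_eq, hlen], hA.nodup_scanl,
      (hA.isChain_gkAdj_scanl hlen hk).imp fun _ _ => Or.inl, fun _ => ?_⟩
    simp only [pathOf, List.getLast_scanl, List.head_scanl, hA.foldl_eq_compl]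
    exact Or.inr ⟨hxB', hxB, Or.inr rfl⟩
  · obtain ⟨x, hx, hyx⟩ := exists_isDyck_mem_pathOf hπ (inMiddleLevels_of_inB hy)
    exact ⟨x, hx, by rw [← length_of_mem_pathOf hyx, hy.1], hyx⟩

/-- The cycle factor `C_k`: each cycle `C(x)` is the path `P(x)` closed up by the
complement edge `{x, x̄}`. -/
theorem stmt_10 (π : List Bool → List ℕ) (hπ : IsPiFun π) (k : ℕ) (hk : 1 ≤ k) :
    (∀ x : List Bool, isDyck x → x.length = 2*k →
      (pathOf π x).length = 2*k + 1 ∧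
      (pathOf π x).Nodup ∧
      List.Chain' (GkPlusAdj k) (pathOf π x) ∧
      (∀ h : pathOf π x ≠ [],
        GkPlusAdj k ((pathOf π x).getLast h) ((pathOf π x).head h)))
    ∧ (∀ x x' : List Bool, isDyck x → x.length = 2*k → isDyck x' → x'.length = 2*k →
        x ≠ x' → ∀ y ∈ pathOf π x, y ∉ pathOf π x')
    ∧ (∀ y : List Bool, inB k y → ∃ x : List Bool,
        isDyck x ∧ x.length = 2*k ∧ y ∈ pathOf π x) :=
  stmt_10_general π hπ k
end

section
/- If the Kneser graph K(n,k) (with n = 2k+1) has a Hamilton cycle (x_1,...,x_N) where N = C(2k+1,k) is odd, then the sequence obtained by alternately taking x_i and the complement of x_i, namely (x_1, x̄_2, x_3, x̄_4, ..., x̄_1, x_2, x̄_3, x_4, ...) traversing the cycle twice, is a Hamilton cycle in the bipartite Kneser graph H(2k+1,k). -/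
/-!
Index the double traversal by `j < 2N`: its `j`-th term is `x_{j mod N}`, complemented when `j`
is odd; as `N` is odd, the second pass flips all parities, which is exactly `altSeq`.
Cyclically consecutive terms then come from disjoint `k`-sets `x, y` with exactly one of them
complemented, and `x ⊂ ȳ` because `|x| + |y| < 2k + 1`. The size of a term (`k` or `k + 1`)
determines the parity of `j`, and the parity together with `j mod N` determines `j < 2N`
since `gcd(2, N) = 1`; this gives both injectivity and surjectivity.
-/

/-- The alternating double traversal `(x_1, x̄_2, x_3, x̄_4, …, x̄_1, x_2, x̄_3, x_4, …)`
of a cyclic listing `L = (x_1, …, x_N)`, where `x̄` denotes the complement. -/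
def altSeq {n : ℕ} (L : List (Finset (Fin n))) : List (Finset (Fin n)) :=
  ((List.range L.length).map (fun i => if i % 2 = 0 then L.getD i ∅ else (L.getD i ∅)ᶜ))
    ++ ((List.range L.length).map (fun i => if i % 2 = 0 then (L.getD i ∅)ᶜ else L.getD i ∅))

open Finset

theorem Nat.exists_lt_two_mul_mod_eq {N i : ℕ} (hN : Odd N) (hi : i < N) (p : ℕ) :
    ∃ j < 2 * N, j % N = i ∧ j % 2 = p % 2 := by
  have hN2 := Nat.odd_iff.mp hN
  by_cases hip : i % 2 = p % 2
  · exact ⟨i, by omega, Nat.mod_eq_of_lt hi, hip⟩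
  · exact ⟨i + N, by omega, by rw [Nat.add_mod_right, Nat.mod_eq_of_lt hi], by omega⟩

theorem Nat.eq_of_mod_eq_of_mod_two_eq {N j j' : ℕ} (hN : Odd N) (hj : j < 2 * N)
    (hj' : j' < 2 * N) (hmodN : j % N = j' % N) (hmod2 : j % 2 = j' % 2) : j = j' := by
  have hcop : Nat.Coprime 2 N := Nat.coprime_two_left.mpr hN
  exact ((Nat.modEq_and_modEq_iff_modEq_mul hcop).mp ⟨hmod2, hmodN⟩).eq_of_lt_of_lt hj hj'

theorem List.getD_mod_length_mem {β : Type*} {L : List β} (hL : L ≠ []) (j : ℕ) (d : β) :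
    L.getD (j % L.length) d ∈ L := by
  have := Nat.mod_lt j (List.length_pos_iff.mpr hL)
  rw [List.getD_eq_getElem _ _ this]
  exact List.getElem_mem this

theorem List.IsChain.rel_getD_mod_succ {β : Type*} {r : β → β → Prop} {L : List β}
    (hchain : L.IsChain r) (hclose : ∀ h : L ≠ [], r (L.getLast h) (L.head h)) (d : β)
    {i : ℕ} (hi : i < L.length) : r (L.getD i d) (L.getD ((i + 1) % L.length) d) := by
  rw [List.getD_eq_getElem _ _ hi]
  rcases Nat.lt_or_ge (i + 1) L.length with hlt | hge
  · rw [Nat.mod_eq_of_lt hlt, List.getD_eq_getElem _ _ hlt]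
    exact List.isChain_iff_getElem.mp hchain i hlt
  · have hL : L ≠ [] := List.ne_nil_of_length_pos (by omega)
    have hlast : i = L.length - 1 := by omega
    have := hclose hL
    rw [List.getLast_eq_getElem, List.head_eq_getElem] at this
    simp only [hlast, Nat.sub_add_cancel (List.length_pos_iff.mpr hL), Nat.mod_self]
    rwa [List.getD_eq_getElem]

section AltCompl

variable {α : Type*} [Fintype α] [DecidableEq α]

theorem Finset.ssubset_compl_of_disjoint {s t : Finset α} (h : Disjoint s t)
    (hcard : #s + #t < Fintype.card α) : s ⊂ tᶜ := by
  refine (subset_compl_iff_disjoint_right.mpr h).ssubset_of_ne ?_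
  rintro rfl
  rw [card_compl_add_card] at hcard
  exact lt_irrefl _ hcard

def altCompl (j : ℕ) (s : Finset α) : Finset α := if j % 2 = 0 then s else sᶜ

theorem altCompl_mod_two (j : ℕ) (s : Finset α) : altCompl (j % 2) s = altCompl j s := by
  simp only [altCompl, Nat.mod_mod]

theorem altCompl_injective (j : ℕ) : Function.Injective (altCompl (α := α) j) := by
  unfold altCompl
  split
  · exact Function.injective_id
  · exact compl_injective

theorem card_altCompl {k : ℕ} (hα : Fintype.card α = 2 * k + 1) {s : Finset α} (hs : #s = k)
    (j : ℕ) : #(altCompl j s) = k + j % 2 := by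
  unfold altCompl
  split
  · omega
  · rw [card_compl, hα, hs]; omega

theorem altCompl_ssubset_or_succ {s t : Finset α} (h : Disjoint s t)
    (hcard : #s + #t < Fintype.card α) (j : ℕ) :
    altCompl j s ⊂ altCompl (j + 1) t ∨ altCompl (j + 1) t ⊂ altCompl j s := by
  unfold altCompl
  rcases Nat.mod_two_eq_zero_or_one j with hj | hj
  · rw [if_pos hj, if_neg (by omega)]
    exact .inl (ssubset_compl_of_disjoint h hcard)
  · rw [if_neg (by omega), if_pos (by omega)]
    exact .inr (ssubset_compl_of_disjoint h.symm (by omega))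

end AltCompl

section AltTerm

variable {n : ℕ}

def altTerm (L : List (Finset (Fin n))) (j : ℕ) : Finset (Fin n) :=
  altCompl j (L.getD (j % L.length) ∅)

theorem altSeq_eq_map_altTerm {L : List (Finset (Fin n))} (hodd : Odd L.length) :
    altSeq L = (List.range (2 * L.length)).map (altTerm L) := by
  have hN2 := Nat.odd_iff.mp hodd
  rw [two_mul, List.range_add, List.map_append, List.map_map, altSeq]
  congr 1
  · refine List.map_congr_left fun i hi => ?_
    simp only [altTerm, Nat.mod_eq_of_lt (List.mem_range.mp hi), altCompl]
  · refine List.map_congr_left fun i hi => ?_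
    simp only [Function.comp_apply, altTerm, Nat.add_mod_left,
      Nat.mod_eq_of_lt (List.mem_range.mp hi), altCompl]
    -- the second pass starts at the odd index `L.length`, which flips every parity
    split_ifs <;> first | rfl | omega

theorem card_altTerm {k : ℕ} {L : List (Finset (Fin (2 * k + 1)))} (hL : L ≠ [])
    (hcard : ∀ s ∈ L, #s = k) (j : ℕ) : #(altTerm L j) = k + j % 2 :=
  card_altCompl (Fintype.card_fin _) (hcard _ (List.getD_mod_length_mem hL j ∅)) j

theorem altTerm_two_mul_length (L : List (Finset (Fin n))) :
    altTerm L (2 * L.length) = altTerm L 0 := by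
  simp [altTerm, altCompl]

theorem altTerm_ssubset_or_succ {k : ℕ} {L : List (Finset (Fin (2 * k + 1)))} (hL : L ≠ [])
    (hcard : ∀ s ∈ L, #s = k) (hchain : L.IsChain Disjoint)
    (hclose : ∀ h : L ≠ [], Disjoint (L.getLast h) (L.head h)) (j : ℕ) :
    altTerm L j ⊂ altTerm L (j + 1) ∨ altTerm L (j + 1) ⊂ altTerm L j := by
  unfold altTerm
  rw [← Nat.mod_add_mod j]
  refine altCompl_ssubset_or_succ ?_ ?_ j
  · exact hchain.rel_getD_mod_succ hclose ∅ (Nat.mod_lt _ (List.length_pos_iff.mpr hL))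
  · rw [hcard _ (List.getD_mod_length_mem hL _ ∅), hcard _ (List.getD_mod_length_mem hL _ ∅),
      Fintype.card_fin]
    omega

theorem altTerm_injOn {k : ℕ} {L : List (Finset (Fin (2 * k + 1)))} (hodd : Odd L.length)
    (hcard : ∀ s ∈ L, #s = k) (hnodup : L.Nodup) :
    Set.InjOn (altTerm L) (Set.Iio (2 * L.length)) := by
  intro j hj j' hj' h
  have hL : L ≠ [] := List.ne_nil_of_length_pos hodd.pos
  have hpos := List.length_pos_iff.mpr hL
  have hmod2 : j % 2 = j' % 2 := by
    have := congrArg Finset.card h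
    rw [card_altTerm hL hcard, card_altTerm hL hcard] at this
    omega
  have hget : L.getD (j % L.length) ∅ = L.getD (j' % L.length) ∅ := by
    unfold altTerm at h
    rw [← altCompl_mod_two j, ← altCompl_mod_two j', hmod2] at h
    exact altCompl_injective _ h
  rw [List.getD_eq_getElem _ _ (Nat.mod_lt _ hpos), List.getD_eq_getElem _ _ (Nat.mod_lt _ hpos),
    hnodup.getElem_inj_iff] at hget
  exact Nat.eq_of_mod_eq_of_mod_two_eq hodd hj hj' hget hmod2

theorem exists_altTerm_eq {k : ℕ} {L : List (Finset (Fin (2 * k + 1)))} (hodd : Odd L.length)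
    (hall : ∀ s : Finset (Fin (2 * k + 1)), #s = k → s ∈ L) {s : Finset (Fin (2 * k + 1))}
    (hs : #s = k ∨ #s = k + 1) : ∃ j < 2 * L.length, altTerm L j = s := by
  obtain ⟨p, t, ht, rfl⟩ : ∃ p t, #t = k ∧ altCompl p t = s := by
    rcases hs with hs | hs
    · exact ⟨0, s, hs, rfl⟩
    · refine ⟨1, sᶜ, ?_, by simp [altCompl]⟩
      rw [card_compl, Fintype.card_fin, hs]; omega
  obtain ⟨i, hi, rfl⟩ := List.mem_iff_getElem.mp (hall t ht)
  obtain ⟨j, hj, hjN, hj2⟩ := Nat.exists_lt_two_mul_mod_eq hodd hi p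
  refine ⟨j, hj, ?_⟩
  rw [altTerm, hjN, List.getD_eq_getElem _ _ hi, ← altCompl_mod_two, hj2, altCompl_mod_two]

end AltTerm

theorem stmt_14_general (k : ℕ) (L : List (Finset (Fin (2*k+1))))
    (hodd : Odd L.length)
    (hcard : ∀ s ∈ L, s.card = k)
    (hnodup : L.Nodup)
    (hall : ∀ s : Finset (Fin (2*k+1)), s.card = k → s ∈ L)
    (hchain : List.Chain' (fun s t => Disjoint s t) L)
    (hclose : ∀ h : L ≠ [], Disjoint (L.getLast h) (L.head h)) :
    (altSeq L).Nodup
    ∧ (∀ s : Finset (Fin (2*k+1)), s.card = k ∨ s.card = k+1 → s ∈ altSeq L)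
    ∧ (∀ s ∈ altSeq L, s.card = k ∨ s.card = k+1)
    ∧ List.Chain' (fun s t : Finset (Fin (2*k+1)) => s ⊂ t ∨ t ⊂ s) (altSeq L)
    ∧ ∀ h : altSeq L ≠ [],
        ((altSeq L).getLast h ⊂ (altSeq L).head h
          ∨ (altSeq L).head h ⊂ (altSeq L).getLast h) := by
  have hL : L ≠ [] := List.ne_nil_of_length_pos hodd.pos
  have hstep := altTerm_ssubset_or_succ hL hcard hchain hclose
  rw [altSeq_eq_map_altTerm hodd]
  refine ⟨?_, ?_, ?_, ?_, fun _ => ?_⟩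
  · refine List.Nodup.map_on (fun j hj j' hj' => ?_) List.nodup_range
    exact altTerm_injOn hodd hcard hnodup (List.mem_range.mp hj) (List.mem_range.mp hj')
  · intro s hs
    obtain ⟨j, hj, rfl⟩ := exists_altTerm_eq hodd hall hs
    exact List.mem_map_of_mem (List.mem_range.mpr hj)
  · rintro _ hs
    obtain ⟨j, -, rfl⟩ := List.mem_map.mp hs
    rw [card_altTerm hL hcard]
    omega
  · exact (List.isChain_map _).mpr ((List.isChain_range _ _).mpr fun j _ => hstep j)
  · rw [List.getLast_map, List.getLast_range, List.head_map, List.head_range,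
      ← altTerm_two_mul_length]
    simpa only [Nat.sub_add_cancel (by linarith [hodd.pos] : 1 ≤ 2 * L.length)]
      using hstep (2 * L.length - 1)

/-- From a Hamilton cycle `L` in the Kneser graph `K(2k+1,k)` (a cyclic listing of all
`k`-subsets of `[2k+1]`, consecutive ones disjoint, of odd length `N = C(2k+1,k)`),
the alternating double traversal `altSeq L` is a Hamilton cycle in the bipartite
Kneser graph `H(2k+1,k)`: its vertices are all `k`- and `(k+1)`-subsets and
adjacency is strict containment in either direction. -/
theorem stmt_14 (k : ℕ) (hk : 1 ≤ k) (L : List (Finset (Fin (2*k+1))))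
    (hlen : L.length = Nat.choose (2*k+1) k)
    (hodd : Odd L.length)
    (hcard : ∀ s ∈ L, s.card = k)
    (hnodup : L.Nodup)
    (hall : ∀ s : Finset (Fin (2*k+1)), s.card = k → s ∈ L)
    (hchain : List.Chain' (fun s t => Disjoint s t) L)
    (hclose : ∀ h : L ≠ [], Disjoint (L.getLast h) (L.head h)) :
    (altSeq L).Nodup
    ∧ (∀ s : Finset (Fin (2*k+1)), s.card = k ∨ s.card = k+1 → s ∈ altSeq L)
    ∧ (∀ s ∈ altSeq L, s.card = k ∨ s.card = k+1)
    ∧ List.Chain' (fun s t : Finset (Fin (2*k+1)) => s ⊂ t ∨ t ⊂ s) (altSeq L)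
    ∧ ∀ h : altSeq L ≠ [],
        ((altSeq L).getLast h ⊂ (altSeq L).head h
          ∨ (altSeq L).head h ⊂ (altSeq L).getLast h) :=
  stmt_14_general k L hodd hcard hnodup hall hchain hclose
end

section
/- Let G be a graph, let C_1, ..., C_ℓ be vertex-disjoint cycles in G, and let C′ be a cycle of length 2ℓ in G that shares exactly one edge with each C_i and whose remaining ℓ edges join vertices of distinct cycles among C_1,...,C_ℓ, with shared and non-shared edges alternating along C′. Then the symmetric difference of the edge set of C′ with the union of the edge sets of C_1,...,C_ℓ is a single cycle whose vertex set is the union of the vertex sets of C_1,...,C_ℓ. -/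
/-!
Along `C'` the shared edges `eₜ` (positions `2t`) alternate with connecting edges `fₜ`
(positions `2t + 1`) that lie in no `C i`, and each `C i` contains exactly one `eₜ`. Deleting `eₜ`
from its cycle leaves a path between the endpoints of `eₜ`; running through these paths in the
order of `C'`, each followed by the connecting edge `fₜ`, gives a closed walk that visits every
vertex of every `C i` exactly once and uses every edge at most once, hence a cycle. Its edges are
the connecting edges together with the non-shared edges of the `C i`, i.e. the symmetric difference.
-/

theorem List.nodup_flatMap_range {α : Type*} {f : ℕ → List α} {k : ℕ}
    (hf : ∀ t < k, (f t).Nodup) (hdisj : ∀ t < k, ∀ s < k, t ≠ s → (f t).Disjoint (f s)) :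
    ((List.range k).flatMap f).Nodup :=
  List.nodup_flatMap.mpr ⟨fun t ht => hf t (List.mem_range.mp ht),
    List.nodup_range.pairwise_of_forall_ne fun t ht s hs hts =>
      hdisj t (List.mem_range.mp ht) s (List.mem_range.mp hs) hts⟩

namespace SimpleGraph.Walk

variable {V : Type*} {G : SimpleGraph V}

theorem disjoint_edges_of_disjoint_support {u v u' v' : V} {p : G.Walk u v} {q : G.Walk u' v'}
    (h : p.support.Disjoint q.support) : p.edges.Disjoint q.edges := by
  intro e hp hq
  induction e using Sym2.ind with
  | _ x y => exact h (p.fst_mem_support_of_mem_edges hp) (q.fst_mem_support_of_mem_edges hq)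

theorem mem_edges_iff_exists_getVert {u v : V} {p : G.Walk u v} {e : Sym2 V} :
    e ∈ p.edges ↔ ∃ n < p.length, s(p.getVert n, p.getVert (n + 1)) = e := by
  induction e using Sym2.ind with
  | _ x y => exact p.mk_mem_edges_iff_exists

theorem IsTrail.eq_of_mk_getVert_eq {u v : V} {p : G.Walk u v} (hp : p.IsTrail) {m n : ℕ}
    (hm : m < p.length) (hn : n < p.length)
    (h : s(p.getVert m, p.getVert (m + 1)) = s(p.getVert n, p.getVert (n + 1))) : m = n := by
  rw [← getElem_edges (by simpa using hm), ← getElem_edges (by simpa using hn)] at h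
  exact (hp.edges_nodup.getElem_inj_iff).mp h

theorem mem_dropLast_support_iff {u y : V} {p : G.Walk u u} (hp : ¬p.Nil) :
    y ∈ p.support.dropLast ↔ y ∈ p.support := by
  rw [← p.tail_support_perm_dropLast_support.mem_iff, mem_support_iff,
    or_iff_right_of_imp fun h => h ▸ end_mem_tail_support hp]

theorem isCycle_of_nodup {u : V} {p : G.Walk u u} (hnil : ¬p.Nil) (he : p.edges.Nodup)
    (hs : p.support.dropLast.Nodup) : p.IsCycle :=
  (isCycle_def p).mpr ⟨⟨he⟩, fun h => hnil (h ▸ nil_nil),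
    p.tail_support_perm_dropLast_support.nodup_iff.mpr hs⟩

theorem IsCycle.exists_isPath_of_snd_eq {a b : V} {c : G.Walk a a} (hc : c.IsCycle)
    (hb : c.snd = b) :
    ∃ p : G.Walk a b, p.IsPath ∧ (∀ e, e ∈ p.edges ↔ e ∈ c.edges ∧ e ≠ s(a, b)) ∧
      ∀ y, y ∈ p.support ↔ y ∈ c.support := by
  subst hb
  have hedges : c.edges = s(a, c.snd) :: c.tail.edges := by
    conv_lhs => rw [← c.cons_tail_eq hc.not_nil]
    rfl
  have hfirst : s(a, c.snd) ∉ c.tail.edges := by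
    have := hc.edges_nodup
    rw [hedges] at this
    exact (List.nodup_cons.mp this).1
  refine ⟨c.tail.reverse, hc.isPath_tail.reverse, fun e => ?_, fun y => ?_⟩
  · rw [edges_reverse, List.mem_reverse, hedges, List.mem_cons]
    constructor
    · exact fun he => ⟨Or.inr he, fun h => hfirst (h ▸ he)⟩
    · rintro ⟨he | he, hne⟩
      exacts [absurd he hne, he]
  · rw [support_reverse, List.mem_reverse, ← cons_support_tail hc.not_nil, List.mem_cons,
      or_iff_right_of_imp fun h => h ▸ c.tail.end_mem_support]

theorem IsCycle.exists_isPath_of_mem_edges {x a b : V} {c : G.Walk x x} (hc : c.IsCycle)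
    (hab : s(a, b) ∈ c.edges) :
    ∃ p : G.Walk a b, p.IsPath ∧ (∀ e, e ∈ p.edges ↔ e ∈ c.edges ∧ e ≠ s(a, b)) ∧
      ∀ y, y ∈ p.support ↔ y ∈ c.support := by
  classical
  have ha : a ∈ c.support := c.fst_mem_support_of_mem_edges hab
  suffices ∃ p : G.Walk a b, p.IsPath ∧
      (∀ e, e ∈ p.edges ↔ e ∈ (c.rotate a ha).edges ∧ e ≠ s(a, b)) ∧
      ∀ y, y ∈ p.support ↔ y ∈ (c.rotate a ha).support by
    simpa only [(c.rotate_edges a ha).mem_iff, mem_support_rotate_iff] using this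
  set c₁ := c.rotate a ha
  have hc₁ : c₁.IsCycle := hc.rotate ha
  have hb : b ∈ c₁.toSubgraph.neighborSet a :=
    adj_toSubgraph_iff_mem_edges.mpr ((c.rotate_edges a ha).mem_iff.mpr hab)
  rw [hc₁.neighborSet_toSubgraph_endpoint, Set.mem_insert_iff, Set.mem_singleton_iff] at hb
  rcases hb with hb | hb
  · exact hc₁.exists_isPath_of_snd_eq hb.symm
  · obtain ⟨p, hp, hpe, hps⟩ := hc₁.reverse.exists_isPath_of_snd_eq (c₁.snd_reverse.trans hb.symm)
    refine ⟨p, hp, fun e => ?_, fun y => ?_⟩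
    · rw [hpe, edges_reverse, List.mem_reverse]
    · rw [hps, support_reverse, List.mem_reverse]

theorem IsCycle.exists_walk_of_mem_edges_of_adj {x a b c : V} {K : G.Walk x x}
    (hK : K.IsCycle) (hab : s(a, b) ∈ K.edges) (hbc : G.Adj b c) (hbcK : s(b, c) ∉ K.edges) :
    ∃ W : G.Walk a c, W.support.dropLast.Nodup ∧
      (∀ y, y ∈ W.support.dropLast ↔ y ∈ K.support) ∧ W.edges.Nodup ∧
      ∀ e, e ∈ W.edges ↔ e = s(b, c) ∨ (e ∈ K.edges ∧ e ≠ s(a, b)) := by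
  obtain ⟨p, hp, hpe, hps⟩ := hK.exists_isPath_of_mem_edges hab
  have hbcp : s(b, c) ∉ p.edges := fun h => hbcK ((hpe _).mp h).1
  refine ⟨p.concat hbc, ?_, fun y => ?_, ?_, fun e => ?_⟩
  · simpa [support_concat] using hp.support_nodup
  · simpa [support_concat] using hps y
  · rw [edges_concat, List.nodup_concat]
    exact ⟨hbcp, hp.isTrail.edges_nodup⟩
  · rw [edges_concat, List.concat_eq_append, List.mem_append, List.mem_singleton, hpe, or_comm]

section Chain

variable {a : ℕ → V}

def chain (W : ∀ t, G.Walk (a t) (a (t + 1))) : (k : ℕ) → G.Walk (a 0) (a k)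
  | 0 => nil
  | k + 1 => (chain W k).append (W k)

variable (W : ∀ t, G.Walk (a t) (a (t + 1)))

theorem edges_chain (k : ℕ) :
    (chain W k).edges = (List.range k).flatMap fun t => (W t).edges := by
  induction k with
  | zero => rfl
  | succ k ih => simp [chain, ih, List.range_succ]

theorem dropLast_support_chain (k : ℕ) :
    (chain W k).support.dropLast = (List.range k).flatMap fun t => (W t).support.dropLast := by
  induction k with
  | zero => rfl
  | succ k ih =>
    simp [chain, support_append_eq_support_dropLast_append, List.dropLast_append_of_ne_nil,
      ih, List.range_succ]

end Chain

theorem IsCycle.exists_isCycle_splice {w : V} {C' : G.Walk w w} (hC' : C'.IsCycle) {ℓ : ℕ}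
    (hlen : C'.length = 2 * ℓ) {x : ℕ → V} (K : ∀ t, G.Walk (x t) (x t))
    (hK : ∀ t < ℓ, (K t).IsCycle)
    (hdisj : ∀ t < ℓ, ∀ s < ℓ, t ≠ s → (K t).support.Disjoint (K s).support)
    (hshared : ∀ t < ℓ, s(C'.getVert (2 * t), C'.getVert (2 * t + 1)) ∈ (K t).edges)
    (hconn : ∀ t < ℓ, ∀ s < ℓ, s(C'.getVert (2 * t + 1), C'.getVert (2 * t + 2)) ∉ (K s).edges) :
    ∃ D : G.Walk w w, D.IsCycle ∧
      (∀ e, e ∈ D.edges ↔ ∃ t < ℓ, e = s(C'.getVert (2 * t + 1), C'.getVert (2 * t + 2)) ∨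
        (e ∈ (K t).edges ∧ e ≠ s(C'.getVert (2 * t), C'.getVert (2 * t + 1)))) ∧
      ∀ y, y ∈ D.support ↔ ∃ t < ℓ, y ∈ (K t).support := by
  have hpieces : ∀ t, ∃ W : G.Walk (C'.getVert (2 * t)) (C'.getVert (2 * (t + 1))), t < ℓ →
      W.support.dropLast.Nodup ∧ (∀ y, y ∈ W.support.dropLast ↔ y ∈ (K t).support) ∧
      W.edges.Nodup ∧ ∀ e, e ∈ W.edges ↔ e = s(C'.getVert (2 * t + 1), C'.getVert (2 * t + 2)) ∨
        (e ∈ (K t).edges ∧ e ≠ s(C'.getVert (2 * t), C'.getVert (2 * t + 1))) := by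
    intro t
    -- `chain` needs a piece for every `t`; beyond `ℓ` both endpoints are `w`.
    by_cases ht : t < ℓ
    · obtain ⟨W, hW⟩ := (hK t ht).exists_walk_of_mem_edges_of_adj (hshared t ht)
        (C'.adj_getVert_succ (by omega)) (hconn t ht t ht)
      exact ⟨W, fun _ => hW⟩
    · refine ⟨nil.copy rfl ?_, fun h => absurd h ht⟩
      rw [getVert_of_length_le _ (by omega), getVert_of_length_le _ (by omega)]
  choose W hW using hpieces
  have hℓ : 0 < ℓ := by have := hC'.three_le_length; omega
  have hend : C'.getVert (2 * ℓ) = w := hlen ▸ C'.getVert_length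
  set D := (chain W ℓ).copy C'.getVert_zero hend
  have hDedges : ∀ e, e ∈ D.edges ↔ ∃ t < ℓ, e ∈ (W t).edges := by
    simp [D, edges_chain]
  have hDsupport : ∀ y, y ∈ D.support.dropLast ↔ ∃ t < ℓ, y ∈ (W t).support.dropLast := by
    simp [D, dropLast_support_chain]
  have hnil : ¬D.Nil := by
    have := (hDedges _).mpr ⟨0, hℓ, ((hW 0 hℓ).2.2.2 _).mpr (Or.inl rfl)⟩
    exact fun h => by simp [h.eq_nil] at this
  refine ⟨D, isCycle_of_nodup hnil ?_ ?_, fun e => ?_, fun y => ?_⟩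
  · simp only [D, edges_copy, edges_chain]
    refine List.nodup_flatMap_range (fun t ht => (hW t ht).2.2.1) fun t ht s hs hts e het hes => ?_
    rw [(hW t ht).2.2.2] at het
    rw [(hW s hs).2.2.2] at hes
    rcases het with rfl | ⟨het, -⟩ <;> rcases hes with hes | ⟨hes, -⟩
    · have := hC'.isTrail.eq_of_mk_getVert_eq (by omega) (by omega) hes
      omega
    · exact hconn t ht s hs hes
    · exact hconn s hs t ht (hes ▸ het)
    · exact disjoint_edges_of_disjoint_support (hdisj t ht s hs hts) het hes
  · simp only [D, support_copy, dropLast_support_chain]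
    refine List.nodup_flatMap_range (fun t ht => (hW t ht).1) fun t ht s hs hts y hyt hys => ?_
    exact hdisj t ht s hs hts (((hW t ht).2.1 y).mp hyt) (((hW s hs).2.1 y).mp hys)
  · rw [hDedges]
    exact exists_congr fun t => and_congr_right fun ht => (hW t ht).2.2.2 e
  · rw [← mem_dropLast_support_iff hnil, hDsupport]
    exact exists_congr fun t => and_congr_right fun ht => (hW t ht).2.1 y

end SimpleGraph.Walk

open SimpleGraph Walk

section AlternatingCycle

variable {V : Type*} {G : SimpleGraph V} {ℓ : ℕ} {v : Fin ℓ → V}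
  {C : ∀ i, G.Walk (v i) (v i)} {w : V} {C' : G.Walk w w}

theorem exists_reindex_of_alternating (hC' : C'.IsCycle) (hlen : C'.length = 2 * ℓ)
    (hdisj : ∀ i j, i ≠ j → (C i).support.Disjoint (C j).support)
    (hshare : ∀ i, ∃! e : Sym2 V, e ∈ C'.edges ∧ e ∈ (C i).edges)
    (halt : ∀ n < 2 * ℓ, (∃ i, s(C'.getVert n, C'.getVert (n + 1)) ∈ (C i).edges) ↔ n % 2 = 0) :
    ∃ σ : ℕ → Fin ℓ,
      (∀ t < ℓ, ∀ i, s(C'.getVert (2 * t), C'.getVert (2 * t + 1)) ∈ (C i).edges ↔ σ t = i) ∧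
      (∀ t < ℓ, ∀ s < ℓ, σ t = σ s → t = s) ∧ ∀ i, ∃ t < ℓ, σ t = i := by
  have hℓ : 0 < ℓ := by have := hC'.three_le_length; omega
  have hσ : ∀ t, ∃ i : Fin ℓ, t < ℓ →
      s(C'.getVert (2 * t), C'.getVert (2 * t + 1)) ∈ (C i).edges := by
    intro t
    by_cases ht : t < ℓ
    · obtain ⟨i, hi⟩ := (halt (2 * t) (by omega)).mpr (by omega)
      exact ⟨i, fun _ => hi⟩
    · exact ⟨⟨0, hℓ⟩, fun h => absurd h ht⟩
  choose σ hσ using hσ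
  have hiff : ∀ t < ℓ, ∀ i, s(C'.getVert (2 * t), C'.getVert (2 * t + 1)) ∈ (C i).edges ↔
      σ t = i := by
    refine fun t ht i => ⟨fun hi => ?_, fun h => h ▸ hσ t ht⟩
    by_contra hne
    exact disjoint_edges_of_disjoint_support (hdisj _ _ hne) (hσ t ht) hi
  refine ⟨σ, hiff, fun t ht s hs hts => ?_, fun i => ?_⟩
  · obtain ⟨_, -, huniq⟩ := hshare (σ s)
    have := (huniq _ ⟨mem_edges_iff_exists_getVert.mpr ⟨2 * t, by omega, rfl⟩, hts ▸ hσ t ht⟩).trans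
      (huniq _ ⟨mem_edges_iff_exists_getVert.mpr ⟨2 * s, by omega, rfl⟩, hσ s hs⟩).symm
    have := hC'.isTrail.eq_of_mk_getVert_eq (by omega) (by omega) this
    omega
  · obtain ⟨e, ⟨heC', hei⟩, -⟩ := hshare i
    obtain ⟨n, hn, rfl⟩ := mem_edges_iff_exists_getVert.mp heC'
    obtain ⟨t, rfl⟩ : ∃ t, n = 2 * t := ⟨n / 2, by have := (halt n (by omega)).mp ⟨i, hei⟩; omega⟩
    exact ⟨t, by omega, (hiff t (by omega) i).mp hei⟩

theorem exists_connector_or_unshared_iff_xor {σ : ℕ → Fin ℓ} (hlen : C'.length = 2 * ℓ)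
    (hshare : ∀ i, ∃! e : Sym2 V, e ∈ C'.edges ∧ e ∈ (C i).edges)
    (halt : ∀ n < 2 * ℓ, (∃ i, s(C'.getVert n, C'.getVert (n + 1)) ∈ (C i).edges) ↔ n % 2 = 0)
    (hσ : ∀ t < ℓ, s(C'.getVert (2 * t), C'.getVert (2 * t + 1)) ∈ (C (σ t)).edges)
    (hsurj : ∀ i, ∃ t < ℓ, σ t = i) (e : Sym2 V) :
    (∃ t < ℓ, e = s(C'.getVert (2 * t + 1), C'.getVert (2 * t + 2)) ∨
        (e ∈ (C (σ t)).edges ∧ e ≠ s(C'.getVert (2 * t), C'.getVert (2 * t + 1)))) ↔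
      Xor (e ∈ C'.edges) (∃ i, e ∈ (C i).edges) := by
  constructor
  · rintro ⟨t, ht, rfl | ⟨he, hne⟩⟩
    · refine Or.inl ⟨mem_edges_iff_exists_getVert.mpr ⟨2 * t + 1, by omega, rfl⟩, fun hi => ?_⟩
      have := (halt (2 * t + 1) (by omega)).mp hi
      omega
    · obtain ⟨_, -, huniq⟩ := hshare (σ t)
      refine Or.inr ⟨⟨σ t, he⟩, fun heC' => hne ((huniq e ⟨heC', he⟩).trans (huniq _
        ⟨mem_edges_iff_exists_getVert.mpr ⟨2 * t, by omega, rfl⟩, hσ t ht⟩).symm)⟩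
  · rintro (⟨heC', hnot⟩ | ⟨⟨i, hi⟩, hnotC'⟩)
    · obtain ⟨n, hn, rfl⟩ := mem_edges_iff_exists_getVert.mp heC'
      obtain ⟨t, rfl⟩ : ∃ t, n = 2 * t + 1 :=
        ⟨n / 2, by have := mt (halt n (by omega)).mpr hnot; omega⟩
      exact ⟨t, by omega, Or.inl rfl⟩
    · obtain ⟨t, ht, rfl⟩ := hsurj i
      exact ⟨t, ht, Or.inr ⟨hi, fun h => hnotC' (h ▸
        mem_edges_iff_exists_getVert.mpr ⟨2 * t, by omega, rfl⟩)⟩⟩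

end AlternatingCycle

theorem stmt_15_general {V : Type*} (G : SimpleGraph V) (ℓ : ℕ)
    (v : Fin ℓ → V) (C : (i : Fin ℓ) → G.Walk (v i) (v i))
    (hC : ∀ i, (C i).IsCycle)
    (hdisj : ∀ i j, i ≠ j → ∀ x, x ∈ (C i).support → x ∉ (C j).support)
    (w : V) (C' : G.Walk w w) (hC' : C'.IsCycle) (hlen : C'.length = 2 * ℓ)
    (hshare : ∀ i, ∃! e : Sym2 V, e ∈ C'.edges ∧ e ∈ (C i).edges)
    (halt : ∀ (n : ℕ) (hn : n < C'.edges.length),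
      ((∃ i, C'.edges.get ⟨n, hn⟩ ∈ (C i).edges) ↔ n % 2 = 0)) :
    ∃ (u : V) (D : G.Walk u u), D.IsCycle ∧
      (∀ e : Sym2 V, e ∈ D.edges ↔ Xor' (e ∈ C'.edges) (∃ i, e ∈ (C i).edges)) ∧
      (∀ x : V, x ∈ D.support ↔ ∃ i, x ∈ (C i).support) := by
  have hdisj' : ∀ i j, i ≠ j → (C i).support.Disjoint (C j).support :=
    fun i j hij x hi hj => hdisj i j hij x hi hj
  have halt' : ∀ n < 2 * ℓ,
      (∃ i, s(C'.getVert n, C'.getVert (n + 1)) ∈ (C i).edges) ↔ n % 2 = 0 := fun n hn => by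
    simpa [getElem_edges] using halt n (by simpa [hlen] using hn)
  obtain ⟨σ, hσ, hinj, hsurj⟩ := exists_reindex_of_alternating hC' hlen hdisj' hshare halt'
  have hσmem : ∀ t < ℓ, s(C'.getVert (2 * t), C'.getVert (2 * t + 1)) ∈ (C (σ t)).edges :=
    fun t ht => (hσ t ht _).mpr rfl
  obtain ⟨D, hD, hDe, hDs⟩ := hC'.exists_isCycle_splice hlen (fun t => C (σ t))
    (fun t _ => hC _) (fun t ht s hs hts => hdisj' _ _ (mt (hinj t ht s hs) hts))
    hσmem (fun t ht s _ h => by have := (halt' (2 * t + 1) (by omega)).mp ⟨_, h⟩; omega)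
  refine ⟨w, D, hD, fun e => (hDe e).trans
    (exists_connector_or_unshared_iff_xor hlen hshare halt' hσmem hsurj e),
    fun x => (hDs x).trans ⟨?_, ?_⟩⟩
  · rintro ⟨t, -, hx⟩
    exact ⟨σ t, hx⟩
  · rintro ⟨i, hx⟩
    obtain ⟨t, ht, rfl⟩ := hsurj i
    exact ⟨t, ht, hx⟩

/-- Joining vertex-disjoint cycles `C 0, …, C (ℓ-1)` via a flipping `2ℓ`-cycle `C'`:
`C'` shares exactly one edge with each `C i`, the shared and non-shared edges alternate
along `C'`, and each non-shared edge joins two distinct cycles. Then the symmetric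
difference of the edge set of `C'` with the union of the edge sets of the `C i` is a
single cycle on the union of the vertex sets of the `C i`. -/
theorem stmt_15 {V : Type*} (G : SimpleGraph V) (ℓ : ℕ) (hℓ : 2 ≤ ℓ)
    (v : Fin ℓ → V) (C : (i : Fin ℓ) → G.Walk (v i) (v i))
    (hC : ∀ i, (C i).IsCycle)
    (hdisj : ∀ i j, i ≠ j → ∀ x, x ∈ (C i).support → x ∉ (C j).support)
    (w : V) (C' : G.Walk w w) (hC' : C'.IsCycle) (hlen : C'.length = 2 * ℓ)
    (hshare : ∀ i, ∃! e : Sym2 V, e ∈ C'.edges ∧ e ∈ (C i).edges)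
    (halt : ∀ (n : ℕ) (hn : n < C'.edges.length),
      ((∃ i, C'.edges.get ⟨n, hn⟩ ∈ (C i).edges) ↔ n % 2 = 0))
    (hjoin : ∀ a b : V, s(a,b) ∈ C'.edges → (∀ i, s(a,b) ∉ (C i).edges) →
      ∃ i j, i ≠ j ∧ a ∈ (C i).support ∧ b ∈ (C j).support) :
    ∃ (u : V) (D : G.Walk u u), D.IsCycle ∧
      (∀ e : Sym2 V, e ∈ D.edges ↔ Xor' (e ∈ C'.edges) (∃ i, e ∈ (C i).edges)) ∧
      (∀ x : V, x ∈ D.support ↔ ∃ i, x ∈ (C i).support) :=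
  stmt_15_general G ℓ v C hC hdisj w C' hC' hlen hshare halt
end
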